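/- arXiv:2405.03294 — 9 statements merged into one kernel-verified Lean document; each statement's English description precedes it below -/
import Mathlib

section
/- For real z > 0 and real s with s > z, the generalized Dirichlet beta function β(z,s) = (1/Γ(s)) ∫₀^∞ x^{s-1}/cosh^z(x) dx admits the series expansion β(z,s) = 2^z Σ_{n=0}^∞ (-1)^n (z)_n / (n! (2n+z)^s), where (z)_n is the Pochhammer symbol. -/
/-!
Writing `2 cosh x = eˣ (1 + e^{-2x})` and expanding `(1 + t)^{-z}` by the binomial series gives
`(2 cosh x)^{-z} = Σ (-1)^n (z)_n / n! · e^{-(2n+z)x}` for `x > 0`. Against `x^{s-1}` each term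
integrates to `Γ(s) / (2n+z)^s`. Termwise integration is legitimate because Euler's limit formula
gives `(z)_n / n! = O(n^{z-1})`, so the series of absolute values converges when `s > z`.
-/

open Real Set MeasureTheory Filter Topology Polynomial Asymptotics
open scoped Nat

theorem Real.Gamma_add_nat_div_Gamma_eq {z : ℝ} (hz : ∀ k : ℕ, z ≠ -k) (n : ℕ) :
    Gamma (z + n) / Gamma z = (ascPochhammer ℝ n).eval z := by
  have hz' : ∀ k : ℕ, (z : ℂ) ≠ -k := fun k h => hz k (by exact_mod_cast h)
  have h := Complex.Gamma_add_nat_div_Gamma_eq (z : ℂ) hz' (n := n)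
  rw [← Complex.ofReal_natCast, ← Complex.ofReal_add, Complex.Gamma_ofReal, Complex.Gamma_ofReal,
    ← Complex.ofReal_div, ← ascPochhammer_map (algebraMap ℝ ℂ), eval_map_algebraMap,
    ← Complex.coe_algebraMap, aeval_algebraMap_apply] at h
  exact_mod_cast h

lemma ascPochhammer_eval_eq_prod_range {R : Type*} [CommSemiring R] (n : ℕ) (r : R) :
    (ascPochhammer R n).eval r = ∏ j ∈ Finset.range n, (r + j) := by
  induction n with
  | zero => simp
  | succ n ih => rw [ascPochhammer_succ_eval, ih, Finset.prod_range_succ]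

lemma Ring.choose_neg_eq_ascPochhammer_eval {K : Type*} [Field K] [CharZero K] (z : K) (n : ℕ) :
    Ring.choose (-z) n = (-1) ^ n * (ascPochhammer K n).eval z / n ! := by
  have h := Ring.factorial_nsmul_multichoose_eq_ascPochhammer z n
  rw [Polynomial.ascPochhammer_smeval_eq_eval, nsmul_eq_mul] at h
  rw [Ring.choose_neg', Units.smul_def, ← h, mul_div_assoc,
    mul_div_cancel_left₀ _ (Nat.cast_ne_zero.2 n.factorial_ne_zero)]
  simp

theorem Real.hasSum_choose_mul_pow (a : ℝ) {t : ℝ} (ht : |t| < 1) :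
    HasSum (fun n => Ring.choose a n * t ^ n) ((1 + t) ^ a) := by
  have h := (one_add_rpow_hasFPowerSeriesOnBall_zero (a := a)).hasSum (y := t)
    (by simpa [Metric.mem_eball, edist_dist] using ht)
  simpa [binomialSeries, FormalMultilinearSeries.ofScalars_apply_eq, mul_comm] using h

theorem Real.hasSum_two_mul_cosh_rpow_neg (z : ℝ) {x : ℝ} (hx : 0 < x) :
    HasSum (fun n : ℕ => (-1) ^ n * (ascPochhammer ℝ n).eval z / n ! * exp (-((2 * n + z) * x)))
      ((2 * cosh x) ^ (-z)) := by
  have ht : |exp (-(2 * x))| < 1 := by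
    rw [abs_of_pos (exp_pos _), exp_lt_one_iff]
    linarith
  have h := (hasSum_choose_mul_pow (-z) ht).mul_right (exp (-(z * x)))
  have hsplit : 2 * cosh x = (1 + exp (-(2 * x))) * exp x := by
    rw [cosh_eq, add_mul, one_mul, ← exp_add]
    ring_nf
  rw [hsplit, mul_rpow (by positivity) (exp_pos x).le, ← exp_mul, mul_neg, mul_comm x z]
  refine h.congr_fun fun n => ?_
  rw [Ring.choose_neg_eq_ascPochhammer_eval, ← exp_nat_mul, mul_assoc, ← exp_add]
  ring_nf

lemma Real.ascPochhammer_eval_div_factorial_mul_GammaSeq {z : ℝ} (hz : 0 < z) (n : ℕ) :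
    (ascPochhammer ℝ n).eval z / n ! * ((z + n) * GammaSeq z n) = (n : ℝ) ^ z := by
  have hp : (ascPochhammer ℝ n).eval z ≠ 0 := (ascPochhammer_pos n z hz).ne'
  have hzn : z + n ≠ 0 := by positivity
  rw [GammaSeq, ← ascPochhammer_eval_eq_prod_range, ascPochhammer_succ_eval]
  field_simp

lemma Real.ascPochhammer_eval_div_factorial_isBigO {z : ℝ} (hz : 0 < z) :
    (fun n : ℕ => (ascPochhammer ℝ n).eval z / n !) =O[atTop] fun n => (n : ℝ) ^ (z - 1) := by
  have hinv : (fun n => (GammaSeq z n)⁻¹) =O[atTop] fun _ => (1 : ℝ) :=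
    ((GammaSeq_tendsto_Gamma z).inv₀ (Gamma_pos_of_pos hz).ne').isBigO_one ℝ
  have hpow : (fun n : ℕ => (n : ℝ) ^ z / (z + n)) =O[atTop] fun n => (n : ℝ) ^ (z - 1) := by
    refine IsBigO.of_bound 1 (eventually_gt_atTop 0 |>.mono fun n hn => ?_)
    have hn' : (0 : ℝ) < n := by exact_mod_cast hn
    rw [norm_div, norm_of_nonneg (by positivity), norm_of_nonneg (by positivity),
      norm_of_nonneg (by positivity), one_mul, rpow_sub_one hn'.ne']
    exact div_le_div_of_nonneg_left (by positivity) hn' (by linarith)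
  refine (hpow.mul hinv).congr' ?_ (Eventually.of_forall fun n => mul_one _)
  filter_upwards [eventually_gt_atTop 0] with n hn
  have hG : GammaSeq z n ≠ 0 := by
    have : (0 : ℝ) < n := by exact_mod_cast hn
    rw [GammaSeq]
    positivity
  have hzn : z + n ≠ 0 := by positivity
  rw [← ascPochhammer_eval_div_factorial_mul_GammaSeq hz n]
  field_simp

lemma Real.summable_ascPochhammer_eval_div_factorial_div_rpow {z s : ℝ} (hz : 0 < z)
    (hs : z < s) : Summable fun n : ℕ => (ascPochhammer ℝ n).eval z / n ! / (2 * n + z) ^ s := by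
  have hrpow : (fun n : ℕ => ((2 * n + z) ^ s)⁻¹) =O[atTop] fun n => (n : ℝ) ^ (-s) := by
    refine IsBigO.of_bound 1 (eventually_gt_atTop 0 |>.mono fun n hn => ?_)
    have hn' : (0 : ℝ) < n := by exact_mod_cast hn
    rw [norm_inv, norm_of_nonneg (by positivity), norm_of_nonneg (by positivity), one_mul,
      rpow_neg hn'.le]
    exact inv_anti₀ (by positivity) (rpow_le_rpow hn'.le (by linarith) (by linarith))
  have hO := (ascPochhammer_eval_div_factorial_isBigO hz).mul hrpow
  refine summable_of_isBigO_nat' (summable_nat_rpow.2 (show z - 1 + -s < -1 by linarith)) ?_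
  refine hO.congr' (Eventually.of_forall fun n => (div_eq_mul_inv _ _).symm) ?_
  filter_upwards [eventually_gt_atTop 0] with n hn
  rw [rpow_add (by exact_mod_cast hn)]

theorem Real.hasSum_integral_rpow_mul_tsum_exp {s : ℝ} (hs : 0 < s) {a b : ℕ → ℝ}
    (hb : ∀ n, 0 < b n) (ha : Summable fun n => |a n| / b n ^ s) :
    HasSum (fun n => Gamma s * (a n / b n ^ s))
      (∫ x in Ioi 0, x ^ (s - 1) * ∑' n, a n * exp (-(b n * x))) := by
  have hint (n : ℕ) : ∫ x in Ioi 0, x ^ (s - 1) * exp (-(b n * x)) = Gamma s / b n ^ s := by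
    rw [integral_rpow_mul_exp_neg_mul_Ioi hs (hb n), one_div, inv_rpow (hb n).le, inv_mul_eq_div]
  have hintegrable (n : ℕ) : IntegrableOn (fun x => x ^ (s - 1) * exp (-(b n * x))) (Ioi 0) :=
    Integrable.of_integral_ne_zero <| by
      rw [hint]
      exact (div_pos (Gamma_pos_of_pos hs) (rpow_pos_of_pos (hb n) s)).ne'
  let F (n : ℕ) (x : ℝ) := a n * (x ^ (s - 1) * exp (-(b n * x)))
  have hF (n : ℕ) : ∫ x in Ioi 0, F n x = Gamma s * (a n / b n ^ s) := by
    rw [integral_const_mul, hint]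
    ring
  have hnorm (n : ℕ) : ∫ x in Ioi 0, ‖F n x‖ = Gamma s * (|a n| / b n ^ s) := by
    rw [setIntegral_congr_fun measurableSet_Ioi
      (g := fun x => |a n| * (x ^ (s - 1) * exp (-(b n * x))))]
    · rw [integral_const_mul, hint]
      ring
    · intro x hx
      simp only [F, norm_mul, Real.norm_eq_abs, abs_of_pos (exp_pos _),
        abs_of_nonneg (rpow_nonneg (le_of_lt hx) _)]
  have hsum : (fun x => ∑' n, F n x) = fun x => x ^ (s - 1) * ∑' n, a n * exp (-(b n * x)) := by
    ext x
    rw [← tsum_mul_left]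
    congr 1 with n
    ring
  have h := hasSum_integral_of_summable_integral_norm (F := F)
    (fun n => (hintegrable n).const_mul (a n)) (by simpa only [hnorm] using ha.mul_left (Gamma s))
  simpa only [hF, hsum] using h

/-- Series expansion of the generalized Dirichlet beta function:
for `z > 0`, `s > z`,
`(1/Γ(s)) ∫₀^∞ x^{s-1} cosh(x)^{-z} dx = 2^z Σ (-1)^n (z)_n / (n! (2n+z)^s)`,
where the Pochhammer symbol `(z)_n = Γ(z+n)/Γ(z)`. -/
theorem generalized_beta_series (z s : ℝ) (hz : 0 < z) (hs : z < s) :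
    (1 / Real.Gamma s) * ∫ x in Set.Ioi (0 : ℝ), x ^ (s - 1) / Real.cosh x ^ z =
      2 ^ z * ∑' n : ℕ,
        (-1) ^ n * (Real.Gamma (z + n) / Real.Gamma z) /
          ((n.factorial : ℝ) * (2 * n + z) ^ s) := by
  have hs0 : 0 < s := hz.trans hs
  set a : ℕ → ℝ := fun n => (-1) ^ n * (ascPochhammer ℝ n).eval z / (n ! : ℝ)
  have hb (n : ℕ) : 0 < 2 * (n : ℝ) + z := by positivity
  have ha : Summable fun n => |a n| / (2 * n + z) ^ s := by
    refine (summable_ascPochhammer_eval_div_factorial_div_rpow hz hs).congr fun n => ?_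
    simp [a, abs_div, abs_of_pos (ascPochhammer_pos n z hz)]
  have hcosh : ∀ x ∈ Ioi (0 : ℝ), x ^ (s - 1) / cosh x ^ z
      = 2 ^ z * (x ^ (s - 1) * ∑' n, a n * exp (-((2 * n + z) * x))) := by
    intro x hx
    rw [(hasSum_two_mul_cosh_rpow_neg z hx).tsum_eq, mul_rpow zero_le_two (cosh_pos x).le,
      rpow_neg zero_le_two, rpow_neg (cosh_pos x).le]
    field_simp
  have hpoch (n : ℕ) : Gamma (z + n) / Gamma z = (ascPochhammer ℝ n).eval z :=
    Gamma_add_nat_div_Gamma_eq (fun k h => by linarith [k.cast_nonneg (α := ℝ)]) n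
  rw [setIntegral_congr_fun measurableSet_Ioi hcosh, integral_const_mul,
    ← (hasSum_integral_rpow_mul_tsum_exp hs0 hb ha).tsum_eq, tsum_mul_left]
  simp only [a, hpoch]
  field_simp
end

section
/- For real z > 0 and real s with s > z, the generalized Riemann zeta function ζ(z,s) = (1/Γ(s)) ∫₀^∞ x^{s-1}/sinh^z(x) dx admits the series expansion ζ(z,s) = 2^z Σ_{n=0}^∞ (z)_n / (n! (2n+z)^s). -/
/-!
Since `sinh x = eˣ (1 - e^{-2x}) / 2`, the integrand is `2^z x^{s-1} e^{-zx} (1 - e^{-2x})^{-z}`;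
expanding the last factor by the binomial series gives a series of terms `x^{s-1} e^{-(2n+z)x}`
with nonnegative coefficients, which may be integrated termwise (Tonelli, in `ℝ≥0∞`) using
`∫₀^∞ x^{s-1} e^{-bx} dx = Γ(s) / b^s`.
-/

open MeasureTheory Real Set
open scoped Nat

lemma lintegral_const_mul_rpow_mul_exp_neg_mul_Ioi {c a r : ℝ} (hc : 0 ≤ c) (ha : 0 < a)
    (hr : 0 < r) :
    ∫⁻ x in Ioi 0, ENNReal.ofReal (c * (x ^ (a - 1) * exp (-(r * x))))
      = ENNReal.ofReal (c * ((1 / r) ^ a * Gamma a)) := by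
  have hint : IntegrableOn (fun x : ℝ ↦ x ^ (a - 1) * exp (-(r * x))) (Ioi 0) := by
    simpa [rpow_one] using
      integrableOn_rpow_mul_exp_neg_mul_rpow (p := 1) (by linarith : -1 < a - 1) one_pos hr
  have hnonneg :
      0 ≤ᵐ[volume.restrict (Ioi 0)] fun x : ℝ ↦ x ^ (a - 1) * exp (-(r * x)) := by
    filter_upwards [self_mem_ae_restrict measurableSet_Ioi] with x (hx : 0 < x)
    positivity
  simp_rw [ENNReal.ofReal_mul hc]
  rw [lintegral_const_mul' _ _ ENNReal.ofReal_ne_top,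
    ← integral_rpow_mul_exp_neg_mul_Ioi ha hr, ofReal_integral_eq_lintegral_ofReal hint hnonneg]

lemma tsum_ofReal_pow_div_factorial {c : ℝ} (hc : 0 ≤ c) :
    ∑' n : ℕ, ENNReal.ofReal (c ^ n / n !) = ENNReal.ofReal (exp c) := by
  rw [← ENNReal.ofReal_tsum_of_nonneg (fun n ↦ by positivity) (summable_pow_div_factorial c),
    exp_eq_exp_ℝ, NormedSpace.exp_eq_tsum_div]

/-- The binomial series `(1 - t) ^ (-z) = ∑ (z)ₙ tⁿ / n!`, obtained by expanding `exp (t u)`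
inside `Γ(z) (1 - t) ^ (-z) = ∫₀^∞ u ^ (z - 1) exp (-(1 - t) u) du`. -/
lemma ofReal_one_sub_rpow_neg_eq_tsum {z t : ℝ} (hz : 0 < z) (ht0 : 0 ≤ t) (ht1 : t < 1) :
    ENNReal.ofReal ((1 - t) ^ (-z))
      = ∑' n : ℕ, ENNReal.ofReal (Gamma (z + n) / Gamma z / n ! * t ^ n) := by
  have h1t : 0 < 1 - t := by linarith
  have hterm (u : ℝ) (hu : 0 < u) (n : ℕ) :
      t ^ n / (Gamma z * n !) * (u ^ (z + n - 1) * exp (-(1 * u)))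
        = 1 / Gamma z * (u ^ (z - 1) * exp (-u)) * ((t * u) ^ n / n !) := by
    rw [show z + (n : ℝ) - 1 = (z - 1) + n by ring, rpow_add hu, rpow_natCast, one_mul]
    ring
  calc ENNReal.ofReal ((1 - t) ^ (-z))
      = ∫⁻ u in Ioi 0, ENNReal.ofReal (1 / Gamma z * (u ^ (z - 1) * exp (-((1 - t) * u)))) := by
        rw [lintegral_const_mul_rpow_mul_exp_neg_mul_Ioi (by positivity) hz h1t, one_div (1 - t),
          inv_rpow h1t.le, rpow_neg h1t.le]
        field_simp
    _ = ∫⁻ u in Ioi 0, ∑' n : ℕ, ENNReal.ofReal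
          (t ^ n / (Gamma z * n !) * (u ^ (z + n - 1) * exp (-(1 * u)))) := by
        refine setLIntegral_congr_fun measurableSet_Ioi fun u (hu : 0 < u) ↦ ?_
        have hA : 0 ≤ 1 / Gamma z * (u ^ (z - 1) * exp (-u)) := by positivity
        simp_rw [hterm u hu, ENNReal.ofReal_mul hA, ENNReal.tsum_mul_left,
          tsum_ofReal_pow_div_factorial (by positivity : 0 ≤ t * u), ← ENNReal.ofReal_mul hA,
          mul_assoc, ← exp_add]
        ring_nf
    _ = ∑' n : ℕ, ENNReal.ofReal (Gamma (z + n) / Gamma z / n ! * t ^ n) := by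
        rw [lintegral_tsum fun n ↦ by fun_prop]
        refine tsum_congr fun n ↦ ?_
        rw [lintegral_const_mul_rpow_mul_exp_neg_mul_Ioi (by positivity) (by positivity) one_pos,
          div_one, one_rpow, one_mul]
        congr 1
        ring

lemma sinh_eq_exp_mul_one_sub_exp (x : ℝ) : sinh x = exp x * (1 - exp (-(2 * x))) / 2 := by
  rw [sinh_eq, mul_sub, mul_one, ← exp_add]
  ring_nf

lemma inv_sinh_rpow {x : ℝ} (hx : 0 < x) (z : ℝ) :
    (sinh x ^ z)⁻¹ = 2 ^ z * exp (-(z * x)) * (1 - exp (-(2 * x))) ^ (-z) := by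
  have h1e : 0 < 1 - exp (-(2 * x)) := sub_pos.mpr (exp_lt_one_iff.mpr (by linarith))
  rw [sinh_eq_exp_mul_one_sub_exp, div_rpow (by positivity) zero_le_two,
    mul_rpow (exp_pos x).le h1e.le, ← exp_mul, rpow_neg h1e.le, exp_neg (z * x), mul_comm z x,
    inv_div, div_eq_mul_inv, mul_inv]
  ring

lemma ofReal_rpow_div_sinh_rpow_eq_tsum {x z : ℝ} (hx : 0 < x) (hz : 0 < z) (s : ℝ) :
    ENNReal.ofReal (x ^ (s - 1) / sinh x ^ z)
      = ∑' n : ℕ, ENNReal.ofReal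
          (2 ^ z * (Gamma (z + n) / Gamma z / n !) * (x ^ (s - 1) * exp (-((2 * n + z) * x)))) := by
  have hexp (n : ℕ) : exp (-(z * x)) * exp (-(2 * x)) ^ n = exp (-((2 * n + z) * x)) := by
    rw [← exp_nat_mul, ← exp_add]
    ring_nf
  have hpos : 0 ≤ x ^ (s - 1) * 2 ^ z * exp (-(z * x)) := by positivity
  rw [div_eq_mul_inv, inv_sinh_rpow hx, ← mul_assoc, ← mul_assoc, ENNReal.ofReal_mul hpos,
    ofReal_one_sub_rpow_neg_eq_tsum hz (exp_pos _).le (exp_lt_one_iff.mpr (by linarith)),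
    ← ENNReal.tsum_mul_left]
  refine tsum_congr fun n ↦ ?_
  rw [← ENNReal.ofReal_mul hpos, ← hexp]
  ring_nf

lemma lintegral_rpow_div_sinh_rpow {z s : ℝ} (hz : 0 < z) (hs : 0 < s) :
    ∫⁻ x in Ioi 0, ENNReal.ofReal (x ^ (s - 1) / sinh x ^ z)
      = ∑' n : ℕ, ENNReal.ofReal
          (Gamma s * (2 ^ z * (Gamma (z + n) / Gamma z / (n ! * (2 * n + z) ^ s)))) := by
  rw [setLIntegral_congr_fun measurableSet_Ioi fun x (hx : 0 < x) ↦
      ofReal_rpow_div_sinh_rpow_eq_tsum hx hz s,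
    lintegral_tsum fun n ↦ by fun_prop]
  refine tsum_congr fun n ↦ ?_
  have hb : 0 < 2 * (n : ℝ) + z := by positivity
  rw [lintegral_const_mul_rpow_mul_exp_neg_mul_Ioi (by positivity) hs hb, one_div, inv_rpow hb.le]
  congr 1
  field_simp

/-- Series expansion of the generalized Riemann zeta function:
for `s > z > 0`,
`(1/Γ(s)) ∫₀^∞ x^{s-1} sinh(x)^{-z} dx = 2^z Σ (z)_n / (n! (2n+z)^s)`,
where the Pochhammer symbol `(z)_n = Γ(z+n)/Γ(z)`. -/
theorem generalized_zeta_series (z s : ℝ) (hz : 0 < z) (hs : z < s) :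
    (1 / Real.Gamma s) * ∫ x in Set.Ioi (0 : ℝ), x ^ (s - 1) / Real.sinh x ^ z =
      2 ^ z * ∑' n : ℕ,
        (Real.Gamma (z + n) / Real.Gamma z) /
          ((n.factorial : ℝ) * (2 * n + z) ^ s) := by
  have hs0 : 0 < s := hz.trans hs
  have hnonneg : 0 ≤ᵐ[volume.restrict (Ioi 0)] fun x : ℝ ↦ x ^ (s - 1) / sinh x ^ z := by
    filter_upwards [self_mem_ae_restrict measurableSet_Ioi] with x (hx : 0 < x)
    have hsinh := sinh_pos_iff.mpr hx
    positivity
  have hmeas : Measurable fun x : ℝ ↦ x ^ (s - 1) / sinh x ^ z := by fun_prop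
  rw [integral_eq_lintegral_of_nonneg_ae hnonneg hmeas.aestronglyMeasurable,
    lintegral_rpow_div_sinh_rpow hz hs0, ENNReal.tsum_toReal_eq fun _ ↦ ENNReal.ofReal_ne_top,
    tsum_congr fun n ↦ ENNReal.toReal_ofReal (by positivity), tsum_mul_left, tsum_mul_left,
    ← mul_assoc, one_div_mul_cancel (Gamma_pos_of_pos hs0).ne', one_mul]
end

section
/- For real s > 2 and real z > 2, the generalized Dirichlet beta function β(z,s) = (1/Γ(s)) ∫₀^∞ x^{s-1}/cosh^z(x) dx satisfies the recurrence β(z,s) = z²·β(z, s+2) − z(z+1)·β(z+2, s+2). -/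
/-!
Since `(cosh ^ (-z))'' = z² cosh ^ (-z) - z (z + 1) cosh ^ (-(z + 2))`, the right-hand side times
`Γ(s + 2)` is `∫₀^∞ x ^ (s + 1) (cosh ^ (-z))''(x) dx`. Integrating by parts twice, with boundary
terms that vanish because `cosh ^ (-z)` and its derivative decay exponentially and `s > 0`, turns
this into `(s + 1) s ∫₀^∞ x ^ (s - 1) cosh ^ (-z)(x) dx = Γ(s + 2) β(z, s)`.
-/

/-- The generalized Dirichlet beta function. -/
noncomputable def genBeta (z s : ℝ) : ℝ :=
  (1 / Real.Gamma s) * ∫ x in Set.Ioi (0 : ℝ), x ^ (s - 1) / Real.cosh x ^ z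

open MeasureTheory Real Set Filter Topology

def ExpDecayOnIoi (h : ℝ → ℝ) : Prop :=
  ∃ C c : ℝ, 0 < c ∧ ∀ x ∈ Ioi (0 : ℝ), |h x| ≤ C * exp (-c * x)

namespace ExpDecayOnIoi

variable {f g : ℝ → ℝ}

lemma mono (hg : ExpDecayOnIoi g) (hfg : ∀ x ∈ Ioi (0 : ℝ), |f x| ≤ |g x|) :
    ExpDecayOnIoi f := by
  obtain ⟨C, c, hc, hb⟩ := hg
  exact ⟨C, c, hc, fun x hx => (hfg x hx).trans (hb x hx)⟩

lemma const_mul (hf : ExpDecayOnIoi f) (a : ℝ) : ExpDecayOnIoi (fun x => a * f x) := by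
  obtain ⟨C, c, hc, hb⟩ := hf
  refine ⟨|a| * C, c, hc, fun x hx => ?_⟩
  rw [abs_mul, mul_assoc]
  exact mul_le_mul_of_nonneg_left (hb x hx) (abs_nonneg a)

lemma integrableOn_rpow_mul (hf : ExpDecayOnIoi f) (hcont : ContinuousOn f (Ioi 0)) {p : ℝ}
    (hp : -1 < p) : IntegrableOn (fun x => x ^ p * f x) (Ioi 0) := by
  obtain ⟨C, c, hc, hb⟩ := hf
  have hdom : IntegrableOn (fun x : ℝ => x ^ p * exp (-c * x)) (Ioi 0) := by
    simpa using integrableOn_rpow_mul_exp_neg_mul_rpow hp one_pos hc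
  refine (hdom.const_mul C).mono' ?_ ?_
  · exact ((continuousOn_id.rpow_const fun x hx => Or.inl (ne_of_gt hx)).mul hcont)
      |>.aestronglyMeasurable measurableSet_Ioi
  · filter_upwards [ae_restrict_mem measurableSet_Ioi] with x (hx : 0 < x)
    rw [norm_mul, norm_of_nonneg (rpow_nonneg hx.le p), mul_left_comm]
    exact mul_le_mul_of_nonneg_left (hb x hx) (rpow_nonneg hx.le p)

lemma tendsto_rpow_mul {l : Filter ℝ} (hf : ExpDecayOnIoi f) {p : ℝ} (hl : ∀ᶠ x in l, 0 < x)
    (hlim : ∀ c > 0, Tendsto (fun x : ℝ => x ^ p * exp (-c * x)) l (𝓝 0)) :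
    Tendsto (fun x => x ^ p * f x) l (𝓝 0) := by
  obtain ⟨C, c, hc, hb⟩ := hf
  refine squeeze_zero_norm' ?_ (by simpa only [mul_zero] using (hlim c hc).const_mul C)
  filter_upwards [hl] with x hx
  rw [norm_mul, norm_of_nonneg (rpow_nonneg hx.le p), mul_left_comm]
  exact mul_le_mul_of_nonneg_left (hb x hx) (rpow_nonneg hx.le p)

end ExpDecayOnIoi

theorem integral_Ioi_rpow_mul_deriv {f f' : ℝ → ℝ} {s : ℝ} (hs : 0 < s)
    (hf : ∀ x ∈ Ioi (0 : ℝ), HasDerivAt f (f' x) x) (hdecay : ExpDecayOnIoi f)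
    (hf' : IntegrableOn (fun x => x ^ s * f' x) (Ioi 0)) :
    ∫ x in Ioi (0 : ℝ), x ^ s * f' x = -(s * ∫ x in Ioi (0 : ℝ), x ^ (s - 1) * f x) := by
  have hcont : ContinuousOn f (Ioi 0) := fun x hx => (hf x hx).continuousAt.continuousWithinAt
  have hpow : ∀ x ∈ Ioi (0 : ℝ), HasDerivAt (fun x => x ^ s) (s * x ^ (s - 1)) x :=
    fun x hx => hasDerivAt_rpow_const (Or.inl (ne_of_gt hx))
  have h_zero : Tendsto (fun x => x ^ s * f x) (𝓝[>] 0) (𝓝 0) :=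
    hdecay.tendsto_rpow_mul self_mem_nhdsWithin fun c _ => by
      have hcts : ContinuousAt (fun x : ℝ => x ^ s * exp (-c * x)) 0 :=
        (continuousAt_rpow_const 0 s (Or.inr hs.le)).mul (by fun_prop)
      simpa [zero_rpow hs.ne'] using hcts.tendsto.mono_left nhdsWithin_le_nhds
  have h_infty : Tendsto (fun x => x ^ s * f x) atTop (𝓝 0) :=
    hdecay.tendsto_rpow_mul (eventually_gt_atTop 0) fun c hc =>
      tendsto_rpow_mul_exp_neg_mul_atTop_nhds_zero s c hc
  have hint : IntegrableOn ((fun x => s * x ^ (s - 1)) * f) (Ioi 0) := by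
    simp_rw [Pi.mul_def, mul_assoc]
    exact (hdecay.integrableOn_rpow_mul hcont (by linarith)).const_mul s
  rw [integral_Ioi_mul_deriv_eq_deriv_mul hpow hf hf' hint h_zero h_infty, ← integral_const_mul]
  simp only [mul_assoc, sub_self, zero_sub]

namespace Real

lemma cosh_rpow_neg_le {c : ℝ} (hc : 0 ≤ c) (x : ℝ) : cosh x ^ (-c) ≤ 2 ^ c * exp (-c * x) := by
  have hexp : exp x / 2 ≤ cosh x := by
    rw [cosh_eq]
    linarith [exp_pos (-x)]
  calc cosh x ^ (-c) ≤ (exp x / 2) ^ (-c) :=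
        rpow_le_rpow_of_nonpos (by positivity) hexp (neg_nonpos.mpr hc)
    _ = 2 ^ c * exp (-c * x) := by
        rw [div_rpow (exp_pos x).le zero_le_two, ← exp_mul, rpow_neg zero_le_two, div_inv_eq_mul]
        ring_nf

lemma abs_sinh_mul_cosh_rpow_neg_le (c x : ℝ) :
    |sinh x * cosh x ^ (-(c + 1))| ≤ cosh x ^ (-c) := by
  have hcosh := cosh_pos x
  have hsinh : |sinh x| ≤ cosh x := by
    rw [abs_sinh, ← cosh_abs]
    exact (sinh_lt_cosh _).le
  calc |sinh x * cosh x ^ (-(c + 1))| ≤ cosh x * cosh x ^ (-(c + 1)) := by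
        rw [abs_mul, abs_of_pos (rpow_pos_of_pos hcosh _)]
        exact mul_le_mul_of_nonneg_right hsinh (rpow_nonneg hcosh.le _)
    _ = cosh x ^ (-c) := by
        rw [mul_comm, ← rpow_add_one hcosh.ne']
        ring_nf

lemma hasDerivAt_cosh_rpow_neg (c x : ℝ) :
    HasDerivAt (fun y => cosh y ^ (-c)) (-c * (sinh x * cosh x ^ (-(c + 1)))) x := by
  convert (hasDerivAt_cosh x).rpow_const (p := -c) (Or.inl (cosh_pos x).ne') using 1
  ring_nf

lemma hasDerivAt_sinh_mul_cosh_rpow_neg (c x : ℝ) :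
    HasDerivAt (fun y => sinh y * cosh y ^ (-(c + 1)))
      ((c + 1) * cosh x ^ (-(c + 2)) - c * cosh x ^ (-c)) x := by
  have hcosh := (cosh_pos x).ne'
  refine ((hasDerivAt_sinh x).mul
    ((hasDerivAt_cosh x).rpow_const (p := -(c + 1)) (Or.inl hcosh))).congr_deriv ?_
  have h_add_one : cosh x ^ (-(c + 1)) = cosh x ^ (-(c + 2)) * cosh x := by
    rw [← rpow_add_one hcosh]; ring_nf
  have h_add_two : cosh x ^ (-c) = cosh x ^ (-(c + 2)) * cosh x ^ 2 := by
    rw [← rpow_natCast, ← rpow_add (cosh_pos x)]; ring_nf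
  rw [show -(c + 1) - 1 = -(c + 2) by ring, h_add_one, h_add_two]
  linear_combination (c + 1) * cosh x ^ (-(c + 2)) * cosh_sq x

end Real

lemma expDecayOnIoi_cosh_rpow_neg {c : ℝ} (hc : 0 < c) :
    ExpDecayOnIoi (fun x => cosh x ^ (-c)) :=
  ⟨2 ^ c, c, hc, fun x _ => by
    rw [abs_of_pos (rpow_pos_of_pos (cosh_pos x) _)]
    exact cosh_rpow_neg_le hc.le x⟩

lemma expDecayOnIoi_sinh_mul_cosh_rpow_neg {c : ℝ} (hc : 0 < c) :
    ExpDecayOnIoi (fun x => sinh x * cosh x ^ (-(c + 1))) :=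
  (expDecayOnIoi_cosh_rpow_neg hc).mono fun x _ => by
    rw [abs_of_pos (rpow_pos_of_pos (cosh_pos x) _)]
    exact abs_sinh_mul_cosh_rpow_neg_le c x

lemma genBeta_eq_integral_div_Gamma (z s : ℝ) :
    genBeta z s = (∫ x in Ioi (0 : ℝ), x ^ (s - 1) * cosh x ^ (-z)) / Gamma s := by
  rw [genBeta, one_div_mul_eq_div]
  congr 1
  refine setIntegral_congr_fun measurableSet_Ioi fun x _ => ?_
  rw [rpow_neg (cosh_pos x).le, div_eq_mul_inv]

theorem integral_rpow_mul_cosh_rpow_neg_recurrence {z s : ℝ} (hz : 0 < z) (hs : 0 < s) :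
    z ^ 2 * (∫ x in Ioi (0 : ℝ), x ^ (s + 1) * cosh x ^ (-z)) -
        z * (z + 1) * (∫ x in Ioi (0 : ℝ), x ^ (s + 1) * cosh x ^ (-(z + 2))) =
      (s + 1) * s * ∫ x in Ioi (0 : ℝ), x ^ (s - 1) * cosh x ^ (-z) := by
  have hInt : ∀ c : ℝ, 0 < c → IntegrableOn (fun x => x ^ (s + 1) * cosh x ^ (-c)) (Ioi 0) :=
    fun c hc => (expDecayOnIoi_cosh_rpow_neg hc).integrableOn_rpow_mul
      (fun x _ => (hasDerivAt_cosh_rpow_neg c x).continuousAt.continuousWithinAt) (by linarith)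
  set v : ℝ → ℝ := fun x => -z * (sinh x * cosh x ^ (-(z + 1)))
  set v' : ℝ → ℝ := fun x => z ^ 2 * cosh x ^ (-z) - z * (z + 1) * cosh x ^ (-(z + 2)) with hv'
  have hv_deriv : ∀ x, HasDerivAt v (v' x) x := fun x =>
    ((hasDerivAt_sinh_mul_cosh_rpow_neg z x).const_mul (-z)).congr_deriv (by ring)
  have hv_decay : ExpDecayOnIoi v := (expDecayOnIoi_sinh_mul_cosh_rpow_neg hz).const_mul (-z)
  have hsplit : ∫ x in Ioi (0 : ℝ), x ^ (s + 1) * v' x =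
      z ^ 2 * (∫ x in Ioi (0 : ℝ), x ^ (s + 1) * cosh x ^ (-z)) -
        z * (z + 1) * ∫ x in Ioi (0 : ℝ), x ^ (s + 1) * cosh x ^ (-(z + 2)) := by
    rw [← integral_const_mul, ← integral_const_mul, ← integral_sub ((hInt z hz).const_mul _)
      ((hInt (z + 2) (by linarith)).const_mul _)]
    exact setIntegral_congr_fun measurableSet_Ioi fun x _ => by simp only [hv']; ring
  have hv'_int : IntegrableOn (fun x => x ^ (s + 1) * v' x) (Ioi 0) :=
    IntegrableOn.congr_fun
      (((hInt z hz).const_mul (z ^ 2)).sub ((hInt (z + 2) (by linarith)).const_mul (z * (z + 1))))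
      (fun x _ => by simp only [hv', Pi.sub_apply]; ring) measurableSet_Ioi
  have ibp₁ : ∫ x in Ioi (0 : ℝ), x ^ s * v x =
      -(s * ∫ x in Ioi (0 : ℝ), x ^ (s - 1) * cosh x ^ (-z)) :=
    integral_Ioi_rpow_mul_deriv hs (fun x _ => hasDerivAt_cosh_rpow_neg z x)
      (expDecayOnIoi_cosh_rpow_neg hz)
      (hv_decay.integrableOn_rpow_mul (fun x _ => (hv_deriv x).continuousAt.continuousWithinAt)
        (by linarith))
  have ibp₂ := integral_Ioi_rpow_mul_deriv (by linarith) (fun x _ => hv_deriv x) hv_decay hv'_int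
  rw [add_sub_cancel_right, ibp₁, hsplit] at ibp₂
  linear_combination ibp₂

/-- Recurrence relation `β(z,s) = z² β(z,s+2) − z(z+1) β(z+2,s+2)` for `z, s > 2`. -/
theorem genBeta_recurrence (z s : ℝ) (hz : 2 < z) (hs : 2 < s) :
    genBeta z s = z ^ 2 * genBeta z (s + 2) - z * (z + 1) * genBeta (z + 2) (s + 2) := by
  have hs0 : 0 < s := by linarith
  have hΓ : Gamma (s + 2) = (s + 1) * s * Gamma s := by
    rw [show s + 2 = s + 1 + 1 by ring, Gamma_add_one (by linarith), Gamma_add_one hs0.ne']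
    ring
  have key := integral_rpow_mul_cosh_rpow_neg_recurrence (by linarith : 0 < z) hs0
  simp only [genBeta_eq_integral_div_Gamma, show s + 2 - 1 = s + 1 by ring, hΓ]
  field_simp [(Gamma_pos_of_pos hs0).ne']
  linear_combination -key
end

section
/- For real s with s > z + 2 > 2, the generalized Riemann zeta function ζ(z,s) = (1/Γ(s)) ∫₀^∞ x^{s-1}/sinh^z(x) dx satisfies the recurrence ζ(z,s) = z²·ζ(z, s+2) + z(z+1)·ζ(z+2, s+2). -/
/-! With `f = sinh ^ (-z)` one has `f'' = z² sinh ^ (-z) + z (z + 1) sinh ^ (-(z + 2))`, so up to the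
factor `1 / Γ(s + 2)` the right-hand side is `∫₀^∞ x ^ (s + 1) f''`. Integrating by parts twice moves
both derivatives onto `x ^ (s + 1)` and gives `s (s + 1) ∫₀^∞ x ^ (s - 1) f`, while
`Γ(s + 2) = s (s + 1) Γ(s)`. The boundary terms and all integrability conditions are controlled by
`sinh x ≥ x` near `0` and `sinh x ≥ eˣ / 4` for `x ≥ 1`. -/

open Real MeasureTheory Set Filter Topology

/-- The generalized Riemann zeta function. -/
noncomputable def genZeta (z s : ℝ) : ℝ :=
  (1 / Real.Gamma s) * ∫ x in Set.Ioi (0 : ℝ), x ^ (s - 1) / Real.sinh x ^ z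

lemma integral_Ioi_rpow_mul_deriv_eq_neg_mul {s : ℝ} {v v' : ℝ → ℝ}
    (hv : ∀ x ∈ Ioi (0 : ℝ), HasDerivAt v (v' x) x)
    (huv' : IntegrableOn (fun x => x ^ s * v' x) (Ioi 0))
    (hu'v : IntegrableOn (fun x => x ^ (s - 1) * v x) (Ioi 0))
    (h_zero : Tendsto (fun x => x ^ s * v x) (𝓝[>] 0) (𝓝 0))
    (h_infty : Tendsto (fun x => x ^ s * v x) atTop (𝓝 0)) :
    ∫ x in Ioi 0, x ^ s * v' x = -(s * ∫ x in Ioi 0, x ^ (s - 1) * v x) := by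
  have hu : ∀ x ∈ Ioi (0 : ℝ), HasDerivAt (fun x => x ^ s) (s * x ^ (s - 1)) x :=
    fun x hx => hasDerivAt_rpow_const (Or.inl (ne_of_gt hx))
  have hsu'v : IntegrableOn (fun x => s * x ^ (s - 1) * v x) (Ioi 0) := by
    simp only [mul_assoc]
    exact hu'v.const_mul s
  rw [integral_Ioi_mul_deriv_eq_deriv_mul hu hv huv' hsu'v h_zero h_infty, ← integral_const_mul]
  simp only [mul_assoc, sub_zero, zero_sub]

namespace Real

lemma exp_div_four_le_sinh {x : ℝ} (hx : 1 ≤ x) : exp x / 4 ≤ sinh x := by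
  have h2 : 2 ≤ exp x := by linarith [add_one_le_exp x]
  have hinv : exp (-x) * exp x = 1 := by rw [← exp_add, neg_add_cancel, exp_zero]
  rw [sinh_eq]
  nlinarith [exp_pos (-x)]

lemma sinh_rpow_neg_le_of_one_le {b x : ℝ} (hb : 0 ≤ b) (hx : 1 ≤ x) :
    sinh x ^ (-b) ≤ 4 ^ b * exp (-b * x) := by
  calc sinh x ^ (-b) ≤ (exp x / 4) ^ (-b) :=
        rpow_le_rpow_of_nonpos (by positivity) (exp_div_four_le_sinh hx) (by linarith)
    _ = 4 ^ b * exp (-b * x) := by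
        rw [div_rpow (exp_pos x).le (by norm_num), ← exp_mul, rpow_neg (by norm_num), div_inv_eq_mul,
          mul_comm x, mul_comm]

lemma cosh_le_sinh_add_one {x : ℝ} (hx : 0 ≤ x) : cosh x ≤ sinh x + 1 := by
  linarith [cosh_sub_sinh x, exp_le_one_iff.mpr (neg_nonpos.mpr hx)]

lemma rpow_mul_sinh_rpow_neg_le_rpow {a b x : ℝ} (hb : 0 ≤ b) (hx : 0 < x) :
    x ^ a * sinh x ^ (-b) ≤ x ^ (a - b) := by
  rw [sub_eq_add_neg, rpow_add hx]
  exact mul_le_mul_of_nonneg_left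
    (rpow_le_rpow_of_nonpos hx (self_le_sinh_iff.mpr hx.le) (neg_nonpos.mpr hb)) (by positivity)

lemma rpow_mul_sinh_rpow_neg_le_of_one_le {a b x : ℝ} (hb : 0 ≤ b) (hx : 1 ≤ x) :
    x ^ a * sinh x ^ (-b) ≤ 4 ^ b * (x ^ a * exp (-b * x)) := by
  rw [mul_left_comm]
  exact mul_le_mul_of_nonneg_left (sinh_rpow_neg_le_of_one_le hb hx) (by positivity)

lemma rpow_mul_cosh_mul_sinh_rpow_neg_le {a b x : ℝ} (hx : 0 < x) :
    x ^ a * (cosh x * sinh x ^ (-b)) ≤ x ^ a * sinh x ^ (-(b - 1)) + x ^ a * sinh x ^ (-b) := by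
  have hS : 0 < sinh x := sinh_pos_iff.mpr hx
  have hmul : sinh x ^ (-(b - 1)) = sinh x * sinh x ^ (-b) := by
    rw [show -(b - 1) = 1 + -b by ring, rpow_add hS, rpow_one]
  rw [hmul, ← mul_add, ← add_one_mul]
  gcongr
  exact cosh_le_sinh_add_one hx.le

lemma continuousOn_sinh_rpow (p : ℝ) : ContinuousOn (fun x => sinh x ^ p) (Ioi 0) :=
  continuous_sinh.continuousOn.rpow_const fun _ hx => Or.inl (sinh_pos_iff.mpr hx).ne'

lemma continuousOn_rpow_mul_sinh_rpow (a p : ℝ) :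
    ContinuousOn (fun x => x ^ a * sinh x ^ p) (Ioi 0) :=
  (continuousOn_id.rpow_const fun _ hx => Or.inl (ne_of_gt hx)).mul (continuousOn_sinh_rpow p)

lemma continuousOn_rpow_mul_cosh_mul_sinh_rpow (a p : ℝ) :
    ContinuousOn (fun x => x ^ a * (cosh x * sinh x ^ p)) (Ioi 0) :=
  (continuousOn_id.rpow_const fun _ hx => Or.inl (ne_of_gt hx)).mul
    (continuous_cosh.continuousOn.mul (continuousOn_sinh_rpow p))

lemma tendsto_rpow_mul_sinh_rpow_neg_nhdsGT_zero {a b : ℝ} (hb : 0 ≤ b) (hab : b < a) :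
    Tendsto (fun x => x ^ a * sinh x ^ (-b)) (𝓝[>] 0) (𝓝 0) := by
  have hbound : Tendsto (fun x : ℝ => x ^ (a - b)) (𝓝[>] 0) (𝓝 0) := by
    simpa [zero_rpow (sub_pos.mpr hab).ne'] using
      ((continuousAt_rpow_const 0 (a - b) (Or.inr (sub_pos.mpr hab).le)).tendsto).mono_left
        nhdsWithin_le_nhds
  refine squeeze_zero' ?_ ?_ hbound <;> filter_upwards [self_mem_nhdsWithin] with x (hx : 0 < x)
  · have := sinh_pos_iff.mpr hx
    positivity
  · exact rpow_mul_sinh_rpow_neg_le_rpow hb hx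

lemma tendsto_rpow_mul_sinh_rpow_neg_atTop (a : ℝ) {b : ℝ} (hb : 0 < b) :
    Tendsto (fun x => x ^ a * sinh x ^ (-b)) atTop (𝓝 0) := by
  have hbound : Tendsto (fun x : ℝ => 4 ^ b * (x ^ a * exp (-b * x))) atTop (𝓝 0) := by
    simpa using (tendsto_rpow_mul_exp_neg_mul_atTop_nhds_zero a b hb).const_mul (4 ^ b)
  refine squeeze_zero' ?_ ?_ hbound <;> filter_upwards [eventually_ge_atTop 1] with x hx
  · have := sinh_pos_iff.mpr (zero_lt_one.trans_le hx)
    positivity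
  · exact rpow_mul_sinh_rpow_neg_le_of_one_le hb.le hx

lemma integrableOn_rpow_mul_sinh_rpow_neg {a b : ℝ} (hb : 0 < b) (hab : b < a + 1) :
    IntegrableOn (fun x => x ^ a * sinh x ^ (-b)) (Ioi 0) := by
  have hmeas (t : Set ℝ) (ht : t ⊆ Ioi 0) (ht_meas : MeasurableSet t) :
      AEStronglyMeasurable (fun x => x ^ a * sinh x ^ (-b)) (volume.restrict t) :=
    ((continuousOn_rpow_mul_sinh_rpow a (-b)).mono ht).aestronglyMeasurable ht_meas
  have hnear : IntegrableOn (fun x => x ^ a * sinh x ^ (-b)) (Ioc 0 1) := by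
    have hdom : IntegrableOn (fun x : ℝ => x ^ (a - b)) (Ioc 0 1) :=
      (intervalIntegrable_iff_integrableOn_Ioc_of_le zero_le_one).mp
        (intervalIntegral.intervalIntegrable_rpow' (by linarith))
    refine hdom.mono' (hmeas _ Ioc_subset_Ioi_self measurableSet_Ioc) ?_
    filter_upwards [ae_restrict_mem measurableSet_Ioc] with x ⟨hx, _⟩
    have := sinh_pos_iff.mpr hx
    rw [norm_of_nonneg (by positivity)]
    exact rpow_mul_sinh_rpow_neg_le_rpow hb.le hx
  have hfar : IntegrableOn (fun x => x ^ a * sinh x ^ (-b)) (Ioi 1) := by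
    have hdom : IntegrableOn (fun x : ℝ => 4 ^ b * (x ^ a * exp (-b * x))) (Ioi 1) := by
      have := (integrableOn_rpow_mul_exp_neg_mul_rpow (p := 1) (by linarith) one_pos hb).mono_set
        (Ioi_subset_Ioi zero_le_one)
      simp only [rpow_one] at this
      exact this.const_mul _
    refine hdom.mono' (hmeas _ (Ioi_subset_Ioi zero_le_one) measurableSet_Ioi) ?_
    filter_upwards [ae_restrict_mem measurableSet_Ioi] with x (hx : 1 < x)
    have := sinh_pos_iff.mpr (zero_lt_one.trans hx)
    rw [norm_of_nonneg (by positivity)]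
    exact rpow_mul_sinh_rpow_neg_le_of_one_le hb.le hx.le
  rw [← Ioc_union_Ioi_eq_Ioi zero_le_one]
  exact hnear.union hfar

lemma tendsto_rpow_mul_cosh_mul_sinh_rpow_neg_nhdsGT_zero {a b : ℝ} (hb : 1 ≤ b) (hab : b < a) :
    Tendsto (fun x => x ^ a * (cosh x * sinh x ^ (-b))) (𝓝[>] 0) (𝓝 0) := by
  have hbound := (tendsto_rpow_mul_sinh_rpow_neg_nhdsGT_zero (sub_nonneg.mpr hb) (by linarith)).add
    (tendsto_rpow_mul_sinh_rpow_neg_nhdsGT_zero (by linarith) hab)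
  rw [add_zero] at hbound
  refine squeeze_zero' ?_ ?_ hbound <;> filter_upwards [self_mem_nhdsWithin] with x (hx : 0 < x)
  · have := sinh_pos_iff.mpr hx
    positivity
  · exact rpow_mul_cosh_mul_sinh_rpow_neg_le hx

lemma tendsto_rpow_mul_cosh_mul_sinh_rpow_neg_atTop (a : ℝ) {b : ℝ} (hb : 1 < b) :
    Tendsto (fun x => x ^ a * (cosh x * sinh x ^ (-b))) atTop (𝓝 0) := by
  have hbound := (tendsto_rpow_mul_sinh_rpow_neg_atTop a (sub_pos.mpr hb)).add
    (tendsto_rpow_mul_sinh_rpow_neg_atTop a (by linarith))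
  rw [add_zero] at hbound
  refine squeeze_zero' ?_ ?_ hbound <;> filter_upwards [eventually_gt_atTop 0] with x hx
  · have := sinh_pos_iff.mpr hx
    positivity
  · exact rpow_mul_cosh_mul_sinh_rpow_neg_le hx

lemma integrableOn_rpow_mul_cosh_mul_sinh_rpow_neg {a b : ℝ} (hb : 1 < b) (hab : b < a + 1) :
    IntegrableOn (fun x => x ^ a * (cosh x * sinh x ^ (-b))) (Ioi 0) := by
  refine ((integrableOn_rpow_mul_sinh_rpow_neg (sub_pos.mpr hb) (by linarith)).add
    (integrableOn_rpow_mul_sinh_rpow_neg (by linarith) hab)).mono'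
    ((continuousOn_rpow_mul_cosh_mul_sinh_rpow a (-b)).aestronglyMeasurable measurableSet_Ioi) ?_
  filter_upwards [ae_restrict_mem measurableSet_Ioi] with x (hx : 0 < x)
  have := sinh_pos_iff.mpr hx
  rw [norm_of_nonneg (by positivity)]
  exact rpow_mul_cosh_mul_sinh_rpow_neg_le hx

lemma hasDerivAt_sinh_rpow_neg (z : ℝ) {x : ℝ} (hx : 0 < x) :
    HasDerivAt (fun y => sinh y ^ (-z)) (-z * (cosh x * sinh x ^ (-(z + 1)))) x := by
  convert (hasDerivAt_sinh x).rpow_const (p := -z) (Or.inl (sinh_pos_iff.mpr hx).ne') using 1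
  rw [show -z - 1 = -(z + 1) by ring]
  ring

lemma hasDerivAt_cosh_mul_sinh_rpow_neg (z : ℝ) {x : ℝ} (hx : 0 < x) :
    HasDerivAt (fun y => cosh y * sinh y ^ (-(z + 1)))
      (-(z * sinh x ^ (-z) + (z + 1) * sinh x ^ (-(z + 2)))) x := by
  have hS : 0 < sinh x := sinh_pos_iff.mpr hx
  refine ((hasDerivAt_cosh x).mul
    ((hasDerivAt_sinh x).rpow_const (p := -(z + 1)) (Or.inl hS.ne'))).congr_deriv ?_
  have h₁ : sinh x ^ (-(z + 1)) = sinh x * sinh x ^ (-(z + 2)) := by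
    rw [show -(z + 1) = 1 + -(z + 2) by ring, rpow_add hS, rpow_one]
  have h₂ : sinh x ^ (-z) = sinh x ^ 2 * sinh x ^ (-(z + 2)) := by
    rw [show -z = 2 + -(z + 2) by ring, rpow_add hS, rpow_two]
  rw [show -(z + 1) - 1 = -(z + 2) by ring, h₁, h₂]
  linear_combination (-(z + 1) * sinh x ^ (-(z + 2))) * cosh_sq x

lemma integral_rpow_mul_sinh_rpow_neg_recurrence {z s : ℝ} (hz : 0 < z) (hzs : z < s) :
    z ^ 2 * (∫ x in Ioi 0, x ^ (s + 1) * sinh x ^ (-z))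
      + z * (z + 1) * (∫ x in Ioi 0, x ^ (s + 1) * sinh x ^ (-(z + 2)))
      = s * (s + 1) * ∫ x in Ioi 0, x ^ (s - 1) * sinh x ^ (-z) := by
  have hC : IntegrableOn (fun x => x ^ s * (cosh x * sinh x ^ (-(z + 1)))) (Ioi 0) :=
    integrableOn_rpow_mul_cosh_mul_sinh_rpow_neg (by linarith) (by linarith)
  have hA := integrableOn_rpow_mul_sinh_rpow_neg (a := s + 1) hz (by linarith)
  have hB := integrableOn_rpow_mul_sinh_rpow_neg (a := s + 1) (b := z + 2) (by linarith) (by linarith)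
  have ibp₁ := integral_Ioi_rpow_mul_deriv_eq_neg_mul (fun x hx => hasDerivAt_sinh_rpow_neg z hx)
    (IntegrableOn.congr_fun (hC.const_mul (-z)) (fun x _ => by ring) measurableSet_Ioi)
    (integrableOn_rpow_mul_sinh_rpow_neg hz (by linarith))
    (tendsto_rpow_mul_sinh_rpow_neg_nhdsGT_zero hz.le (by linarith))
    (tendsto_rpow_mul_sinh_rpow_neg_atTop s hz)
  have ibp₂ := integral_Ioi_rpow_mul_deriv_eq_neg_mul (s := s + 1)
    (fun x hx => hasDerivAt_cosh_mul_sinh_rpow_neg z hx)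
    (IntegrableOn.congr_fun ((hA.const_mul z).add (hB.const_mul (z + 1))).neg
      (fun x _ => by simp only [Pi.neg_apply, Pi.add_apply]; ring)
      measurableSet_Ioi)
    (by simpa only [add_sub_cancel_right] using hC)
    (tendsto_rpow_mul_cosh_mul_sinh_rpow_neg_nhdsGT_zero (by linarith) (by linarith))
    (tendsto_rpow_mul_cosh_mul_sinh_rpow_neg_atTop _ (by linarith))
  have hI₁ : ∫ x in Ioi 0, x ^ s * (-z * (cosh x * sinh x ^ (-(z + 1))))
      = -z * ∫ x in Ioi 0, x ^ s * (cosh x * sinh x ^ (-(z + 1))) := by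
    rw [← integral_const_mul]
    simp only [mul_left_comm]
  have hI₂ : ∫ x in Ioi 0, x ^ (s + 1) * -(z * sinh x ^ (-z) + (z + 1) * sinh x ^ (-(z + 2)))
      = -(z * (∫ x in Ioi 0, x ^ (s + 1) * sinh x ^ (-z))
        + (z + 1) * ∫ x in Ioi 0, x ^ (s + 1) * sinh x ^ (-(z + 2))) := by
    rw [← integral_const_mul, ← integral_const_mul, ← integral_add (hA.const_mul z)
      (hB.const_mul (z + 1)), ← integral_neg]
    congr 1 with x
    ring
  rw [add_sub_cancel_right] at ibp₂
  linear_combination (-z) * (hI₂.symm.trans ibp₂) - (s + 1) * (hI₁.symm.trans ibp₁)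

end Real

lemma genZeta_eq_integral_rpow_neg (z s : ℝ) :
    genZeta z s = (Gamma s)⁻¹ * ∫ x in Ioi 0, x ^ (s - 1) * sinh x ^ (-z) := by
  rw [genZeta, one_div]
  congr 1
  refine setIntegral_congr_fun measurableSet_Ioi fun x hx => ?_
  rw [rpow_neg (sinh_pos_iff.mpr hx).le, div_eq_mul_inv]

/-- Recurrence relation `ζ(z,s) = z² ζ(z,s+2) + z(z+1) ζ(z+2,s+2)` for `s > z + 2 > 2`. -/
theorem genZeta_recurrence (z s : ℝ) (hz : 0 < z) (hs : z + 2 < s) :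
    genZeta z s = z ^ 2 * genZeta z (s + 2) + z * (z + 1) * genZeta (z + 2) (s + 2) := by
  have hs₀ : 0 < s := by linarith
  have hΓ : Gamma (s + 2) = s * (s + 1) * Gamma s := by
    rw [show s + 2 = s + 1 + 1 by ring, Gamma_add_one (by positivity), Gamma_add_one hs₀.ne']
    ring
  have hΓ₀ : Gamma s ≠ 0 := (Gamma_pos_of_pos hs₀).ne'
  have hrec := integral_rpow_mul_sinh_rpow_neg_recurrence hz (by linarith : z < s)
  simp only [genZeta_eq_integral_rpow_neg, hΓ, show s + 2 - 1 = s + 1 by ring]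
  field_simp
  linear_combination -hrec
end

section
/- For each natural number n ≥ 1, the Dirichlet beta value at an even integer satisfies β(2n) = (1/2) Σ_{k=n}^∞ C(2k, 2n−1) · (2^{2k+1} − 1)/16^k · ζ(2k+1), where β is the Dirichlet beta function, ζ is the Riemann zeta function, and C(·,·) is a binomial coefficient. -/
/-!
Split β(2n) into the pairs (4m+1)^{-2n} - (4m+3)^{-2n}. With q = 2m+1 and y = 2q such a pair is
(y-1)^{-2n} - (y+1)^{-2n}, and the odd part of the binomial series of (1 - 1/y)^{-2n} expands it as
Σ_{k ≥ n} C(2k, 2n-1) 4^{-k} q^{-(2k+1)}. All terms are nonnegative, so the double sum over m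
and k may be reordered, and Σ_m q^{-(2k+1)} = (1 - 2^{-(2k+1)}) ζ(2k+1).
-/

open Function

theorem Summable.hasSum_pairs {G : Type*} [AddCommGroup G] [UniformSpace G] [IsUniformAddGroup G]
    [CompleteSpace G] [T2Space G] {f : ℕ → G} (hf : Summable f) :
    HasSum (fun k => f (2 * k) + f (2 * k + 1)) (∑' k, f k) := by
  have hdouble : Injective fun k : ℕ => 2 * k := mul_right_injective₀ two_ne_zero
  have he := hf.comp_injective hdouble
  have ho := hf.comp_injective ((add_left_injective 1).comp hdouble)
  rw [← tsum_even_add_odd he ho]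
  exact he.hasSum.add ho.hasSum

theorem tsum_comm_of_nonneg_of_hasSum {β γ : Type*} {F : β → γ → ℝ} {g : β → ℝ}
    (hF : ∀ b c, 0 ≤ F b c) (hg : ∀ b, HasSum (F b) (g b)) (hsum : Summable g) :
    ∑' c, ∑' b, F b c = ∑' b, g b := by
  have hprod : Summable (uncurry F) :=
    (summable_prod_of_nonneg fun p => hF p.1 p.2).mpr
      ⟨fun b => (hg b).summable, by simpa only [(hg _).tsum_eq] using hsum⟩
  rw [hprod.tsum_comm]
  exact tsum_congr fun b => (hg b).tsum_eq

theorem summable_one_div_two_mul_add_one_pow {s : ℕ} (hs : 1 < s) :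
    Summable fun m : ℕ => 1 / (2 * (m : ℝ) + 1) ^ s := by
  have hodd : Injective fun m : ℕ => 2 * m + 1 := fun _ _ h => by simpa using h
  simpa [comp_def] using (Real.summable_one_div_nat_pow.mpr hs).comp_injective hodd

theorem hasSum_alternating_odd_pow_pairs {s : ℕ} (hs : 1 < s) :
    HasSum (fun m : ℕ => 1 / (4 * (m : ℝ) + 1) ^ s - 1 / (4 * (m : ℝ) + 3) ^ s)
      (∑' m : ℕ, (-1) ^ m / (2 * (m : ℝ) + 1) ^ s) := by
  have hf : Summable fun m : ℕ => (-1) ^ m / (2 * (m : ℝ) + 1) ^ s := by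
    refine Summable.of_norm ((summable_one_div_two_mul_add_one_pow hs).congr fun m => ?_)
    rw [norm_div, norm_pow, norm_pow, norm_neg, norm_one, one_pow,
      Real.norm_of_nonneg (by positivity)]
  refine hf.hasSum_pairs.congr_fun fun m => ?_
  simp only [pow_succ, pow_mul]
  push_cast
  ring

theorem two_pow_sub_one_mul_tsum_one_div_nat_add_one_pow {s : ℕ} (hs : 1 < s) :
    (2 ^ s - 1) * ∑' m : ℕ, 1 / ((m : ℝ) + 1) ^ s =
      2 ^ s * ∑' m : ℕ, 1 / (2 * (m : ℝ) + 1) ^ s := by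
  set f : ℕ → ℝ := fun m => 1 / ((m : ℝ) + 1) ^ s
  have hf : Summable f := by
    simpa [f] using (summable_nat_add_iff 1).mpr (Real.summable_one_div_nat_pow.mpr hs)
  have hsplit :
      ∑' m, f m = ∑' m : ℕ, 1 / (2 * (m : ℝ) + 1) ^ s + (2 ^ s)⁻¹ * ∑' m, f m := by
    refine hf.hasSum_pairs.unique <| ((summable_one_div_two_mul_add_one_pow hs).hasSum.add
      (hf.hasSum.mul_left _)).congr_fun fun m => ?_
    simp only [f]
    push_cast
    rw [show 2 * (m : ℝ) + 1 + 1 = 2 * (m + 1) by ring, mul_pow]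
    field_simp
  field_simp at hsplit
  linear_combination hsplit

theorem hasSum_two_mul_choose_mul_pow_odd {𝕜 : Type*} [NormedField 𝕜]
    [HasSummableGeomSeries 𝕜] (r : ℕ) {x : 𝕜} (hx : ‖x‖ < 1) :
    HasSum (fun j : ℕ => 2 * (((2 * j + 1 + r).choose r : 𝕜) * x ^ (2 * j + 1)))
      (1 / (1 - x) ^ (r + 1) - 1 / (1 + x) ^ (r + 1)) := by
  have hdiff := (hasSum_choose_mul_geometric_of_norm_lt_one r hx).sub
    (hasSum_choose_mul_geometric_of_norm_lt_one r (r := -x) (by rwa [norm_neg]))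
  rw [sub_neg_eq_add] at hdiff
  have hodd : Injective fun j : ℕ => 2 * j + 1 := fun _ _ h => by simpa using h
  refine (hodd.hasSum_iff ?_).mpr hdiff |>.congr_fun fun j => ?_
  · rintro i hi
    obtain ⟨t, rfl⟩ : Even i :=
      Nat.not_odd_iff_even.mp fun ⟨j, hj⟩ => hi ⟨j, hj.symm⟩
    simp [Even.neg_pow ⟨t, rfl⟩]
  · simp only [comp_apply, Odd.neg_pow ⟨j, rfl⟩]
    ring

theorem hasSum_choose_div_pow_odd {𝕜 : Type*} [NormedField 𝕜] [HasSummableGeomSeries 𝕜]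
    [CharZero 𝕜] (r : ℕ) {y : 𝕜} (hy : 1 < ‖y‖) :
    HasSum (fun j : ℕ => ((2 * j + 1 + r).choose r : 𝕜) / y ^ (2 * j + 1 + r))
      (y / 2 * (1 / (y - 1) ^ (r + 1) - 1 / (y + 1) ^ (r + 1))) := by
  have hy0 : y ≠ 0 := norm_pos_iff.mp (one_pos.trans hy)
  have hy1 : y - 1 ≠ 0 := fun h => by simp [sub_eq_zero.mp h] at hy
  have hy2 : y + 1 ≠ 0 := fun h => by simp [eq_neg_of_add_eq_zero_left h] at hy
  have hx : ‖y⁻¹‖ < 1 := by rw [norm_inv]; exact inv_lt_one_of_one_lt₀ hy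
  have hvalue : y / 2 * (1 / (y - 1) ^ (r + 1) - 1 / (y + 1) ^ (r + 1)) =
      y⁻¹ ^ r / 2 * (1 / (1 - y⁻¹) ^ (r + 1) - 1 / (1 + y⁻¹) ^ (r + 1)) := by
    rw [show 1 - y⁻¹ = (y - 1) / y by field_simp, show 1 + y⁻¹ = (y + 1) / y by field_simp,
      div_pow, div_pow, one_div_div, one_div_div, inv_pow]
    field_simp
    ring
  rw [hvalue]
  refine ((hasSum_two_mul_choose_mul_pow_odd r hx).mul_left _).congr_fun fun j => ?_
  rw [div_eq_mul_inv, ← inv_pow, pow_add]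
  ring

theorem hasSum_choose_div_four_pow_div_odd_pow (n : ℕ) (hn : 1 ≤ n) (m : ℕ) :
    HasSum (fun j : ℕ => ((2 * (n + j)).choose (2 * n - 1) : ℝ) / 4 ^ (n + j) /
        (2 * (m : ℝ) + 1) ^ (2 * (n + j) + 1))
      (1 / (4 * (m : ℝ) + 1) ^ (2 * n) - 1 / (4 * (m : ℝ) + 3) ^ (2 * n)) := by
  set q : ℝ := 2 * m + 1
  have hq : 0 < q := by positivity
  have hy : 1 < ‖2 * q‖ := by
    rw [Real.norm_of_nonneg (by positivity)]
    linarith [show (1 : ℝ) ≤ q by simp [q]]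
  have h := (hasSum_choose_div_pow_odd (2 * n - 1) hy).div_const q
  rw [show 2 * n - 1 + 1 = 2 * n by omega, show 2 * q - 1 = 4 * m + 1 by ring,
    show 2 * q + 1 = 4 * m + 3 by ring, mul_div_cancel_left₀ q two_ne_zero,
    mul_div_cancel_left₀ _ hq.ne'] at h
  refine h.congr_fun fun j => ?_
  rw [show 2 * j + 1 + (2 * n - 1) = 2 * (n + j) by omega, mul_pow, pow_mul, pow_succ]
  norm_num [div_div, mul_assoc]

/-- `β(2n) = (1/2) Σ_{k=n}^∞ C(2k,2n−1) (2^{2k+1}−1)/16^k ζ(2k+1)` for `n ≥ 1`. -/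
theorem beta_even_series (n : ℕ) (hn : 1 ≤ n) :
    (∑' m : ℕ, (-1) ^ m / (2 * (m : ℝ) + 1) ^ (2 * n)) =
      (1 / 2) * ∑' j : ℕ,
        (Nat.choose (2 * (n + j)) (2 * n - 1) : ℝ) *
          ((2 ^ (2 * (n + j) + 1) - 1) / 16 ^ (n + j)) *
          ∑' m : ℕ, (1 : ℝ) / ((m : ℝ) + 1) ^ (2 * (n + j) + 1) := by
  have hrow (j : ℕ) : (Nat.choose (2 * (n + j)) (2 * n - 1) : ℝ) *
      ((2 ^ (2 * (n + j) + 1) - 1) / 16 ^ (n + j)) *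
      ∑' m : ℕ, (1 : ℝ) / ((m : ℝ) + 1) ^ (2 * (n + j) + 1) =
      2 * ∑' m : ℕ, ((2 * (n + j)).choose (2 * n - 1) : ℝ) / 4 ^ (n + j) /
        (2 * (m : ℝ) + 1) ^ (2 * (n + j) + 1) := by
    rw [mul_div_assoc', div_mul_eq_mul_div, mul_assoc,
      two_pow_sub_one_mul_tsum_one_div_nat_add_one_pow (by omega), ← tsum_mul_left,
      ← tsum_mul_left, ← tsum_div_const, ← tsum_mul_left]
    refine tsum_congr fun m => ?_
    rw [show (16 : ℝ) = 4 * 4 by norm_num, mul_pow, pow_succ, pow_mul]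
    field_simp
    ring
  have hpairs := hasSum_alternating_odd_pow_pairs (s := 2 * n) (by omega)
  rw [tsum_congr hrow, tsum_mul_left, ← mul_assoc, one_div_mul_cancel two_ne_zero, one_mul,
    tsum_comm_of_nonneg_of_hasSum (fun m j => by positivity)
      (hasSum_choose_div_four_pow_div_odd_pow n hn) hpairs.summable, hpairs.tsum_eq]
end

section
/- For real z > 0, the generalized Dirichlet beta function satisfies β(z,2) = 2 ∫₀¹∫₀¹ (2xy)^{z-1}/(1 + x²y²)^z dx dy, where β(z,2) = ∫₀^∞ x/cosh^z(x) dx. -/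
/-!
The substitution `x = -log u` turns `β(z,2)` into `2 ∫₀¹ (-log u) h(u) du` with
`h(u) = (2u)^{z-1}/(1+u²)^z`, because `cosh(-log u) = (1+u²)/(2u)`. On the other hand
`∫₀¹∫₀¹ h(xy) dy dx = ∫₀¹ (-log u) h(u) du`: the substitution `u = xy` makes the inner integral
`x⁻¹ ∫₀ˣ h`, and exchanging the order of integration over the triangle `0 < u < x < 1` produces
the weight `∫ᵤ¹ dx/x = -log u`.
-/

open Real MeasureTheory Set Function
open scoped ENNReal

theorem image_neg_log_Ioo_zero_one : (fun u : ℝ => -log u) '' Ioo 0 1 = Ioi 0 := by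
  rw [show (fun u : ℝ => -log u) = Neg.neg ∘ log from rfl, image_comp, image_log_Ioo_zero one_pos,
    log_one, image_neg_Iio, neg_zero]

theorem integral_Ioi_zero_eq_integral_Ioo_neg_log {E : Type*} [NormedAddCommGroup E]
    [NormedSpace ℝ E] (g : ℝ → E) :
    ∫ x in Ioi 0, g x = ∫ u in Ioo 0 1, u⁻¹ • g (-log u) := by
  rw [← image_neg_log_Ioo_zero_one,
    integral_image_eq_integral_abs_deriv_smul (f := fun u => -log u) measurableSet_Ioo
      (fun u hu => ((hasDerivAt_log hu.1.ne').neg).hasDerivWithinAt)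
      (fun a ha b hb h => log_injOn_pos ha.1 hb.1 (neg_injective h))]
  refine setIntegral_congr_fun measurableSet_Ioo fun u hu => ?_
  rw [abs_neg, abs_inv, abs_of_pos hu.1]

theorem cosh_neg_log {u : ℝ} (hu : 0 < u) : cosh (-log u) = (1 + u ^ 2) / (2 * u) := by
  rw [cosh_eq, exp_neg, exp_log hu, neg_neg, exp_log hu]
  field_simp

theorem image_mul_left_Ioo_zero_one {x : ℝ} (hx : 0 < x) : (x * ·) '' Ioo 0 1 = Ioo 0 x := by
  simp [image_mul_left_Ioo hx]

theorem lintegral_Ioo_comp_mul_left (F : ℝ → ℝ≥0∞) {x : ℝ} (hx : 0 < x) :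
    ∫⁻ y in Ioo 0 1, F (x * y) = ∫⁻ u in Ioo 0 x, ENNReal.ofReal x⁻¹ * F u := by
  rw [← image_mul_left_Ioo_zero_one hx,
    lintegral_image_eq_lintegral_abs_deriv_mul (f' := fun _ => x) measurableSet_Ioo
      (fun y _ => by simpa using ((hasDerivAt_id y).const_mul x).hasDerivWithinAt)
      (mul_right_injective₀ hx.ne').injOn]
  refine setLIntegral_congr_fun measurableSet_Ioo fun y _ => ?_
  rw [← mul_assoc, ← ENNReal.ofReal_mul (abs_nonneg _), abs_of_pos hx, mul_inv_cancel₀ hx.ne',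
    ENNReal.ofReal_one, one_mul]

theorem MeasureTheory.IntegrableOn.comp_mul_left_Ioo {E : Type*} [NormedAddCommGroup E]
    [NormedSpace ℝ E] {f : ℝ → E} {x : ℝ} (hx : 0 < x) (hf : IntegrableOn f (Ioo 0 x)) :
    IntegrableOn (fun y => f (x * y)) (Ioo 0 1) := by
  rw [← image_mul_left_Ioo_zero_one hx, integrableOn_image_iff_integrableOn_abs_deriv_smul
    (f' := fun _ => x) measurableSet_Ioo
    (fun y _ => by simpa using ((hasDerivAt_id y).const_mul x).hasDerivWithinAt)
    (mul_right_injective₀ hx.ne').injOn, abs_of_pos hx] at hf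
  simpa only [IntegrableOn, Pi.smul_def, smul_smul, inv_mul_cancel₀ hx.ne', one_smul]
    using hf.smul x⁻¹

theorem ofReal_neg_log_eq_lintegral_inv {u : ℝ} (hu : 0 < u) (hu1 : u ≤ 1) :
    ENNReal.ofReal (-log u) = ∫⁻ x in Ioo u 1, ENNReal.ofReal x⁻¹ := by
  have hint : IntegrableOn (fun x : ℝ => x⁻¹) (Ioo u 1) :=
    (continuousOn_inv₀.mono fun x hx => (hu.trans_le hx.1).ne').integrableOn_compact isCompact_Icc
      |>.mono_set Ioo_subset_Icc_self
  rw [← ofReal_integral_eq_lintegral_ofReal hint, ← integral_Ioc_eq_integral_Ioo,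
    ← intervalIntegral.integral_of_le hu1, integral_inv_of_pos hu one_pos, one_div, log_inv]
  filter_upwards [ae_restrict_mem measurableSet_Ioo] with x hx
  exact inv_nonneg.2 (hu.trans hx.1).le

theorem lintegral_Ioo_lintegral_Ioo_swap {a b : ℝ} {G : ℝ → ℝ → ℝ≥0∞}
    (hG : Measurable (uncurry G)) :
    ∫⁻ x in Ioo a b, ∫⁻ u in Ioo a x, G x u = ∫⁻ u in Ioo a b, ∫⁻ x in Ioo u b, G x u := by
  set H : ℝ → ℝ → ℝ≥0∞ := fun x u => {p : ℝ × ℝ | p.2 < p.1}.indicator (uncurry G) (x, u)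
  have hH : Measurable (uncurry H) :=
    hG.indicator (measurableSet_lt measurable_snd measurable_fst)
  have hleft : ∀ x ∈ Ioo a b, ∫⁻ u in Ioo a x, G x u = ∫⁻ u in Ioo a b, H x u := by
    intro x hx
    have hHx : H x = (Iio x).indicator (G x) := by
      ext u; simp only [H, indicator_apply, mem_ofPred_eq, mem_Iio, uncurry_apply_pair]
    rw [hHx, lintegral_indicator measurableSet_Iio, Measure.restrict_restrict measurableSet_Iio,
      Iio_inter_Ioo, min_eq_left hx.2.le]
  have hright : ∀ u ∈ Ioo a b, ∫⁻ x in Ioo u b, G x u = ∫⁻ x in Ioo a b, H x u := by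
    intro u hu
    have hHu : (H · u) = (Ioi u).indicator (G · u) := by
      ext x; simp only [H, indicator_apply, mem_ofPred_eq, mem_Ioi, uncurry_apply_pair]
    rw [hHu, lintegral_indicator measurableSet_Ioi, Measure.restrict_restrict measurableSet_Ioi,
      Ioi_inter_Ioo, max_eq_left hu.1.le]
  rw [setLIntegral_congr_fun measurableSet_Ioo hleft,
    setLIntegral_congr_fun measurableSet_Ioo hright]
  exact lintegral_lintegral_swap hH.aemeasurable

theorem lintegral_Ioo_lintegral_Ioo_comp_mul {F : ℝ → ℝ≥0∞} (hF : Measurable F) :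
    ∫⁻ x in Ioo 0 1, ∫⁻ y in Ioo 0 1, F (x * y) =
      ∫⁻ u in Ioo 0 1, ENNReal.ofReal (-log u) * F u := calc
  _ = ∫⁻ x in Ioo 0 1, ∫⁻ u in Ioo 0 x, ENNReal.ofReal x⁻¹ * F u :=
    setLIntegral_congr_fun measurableSet_Ioo fun x hx => lintegral_Ioo_comp_mul_left F hx.1
  _ = ∫⁻ u in Ioo 0 1, ∫⁻ x in Ioo u 1, ENNReal.ofReal x⁻¹ * F u :=
    lintegral_Ioo_lintegral_Ioo_swap
      ((measurable_fst.inv.ennreal_ofReal).mul (hF.comp measurable_snd))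
  _ = _ := by
    refine setLIntegral_congr_fun measurableSet_Ioo fun u hu => ?_
    rw [lintegral_mul_const _ measurable_inv.ennreal_ofReal,
      ofReal_neg_log_eq_lintegral_inv hu.1 hu.2.le]

theorem integral_Ioo_integral_Ioo_comp_mul {f : ℝ → ℝ} (hf : Measurable f)
    (hfi : IntegrableOn f (Ioo 0 1)) (hf0 : ∀ u ∈ Ioo (0 : ℝ) 1, 0 ≤ f u) :
    ∫ x in Ioo 0 1, ∫ y in Ioo 0 1, f (x * y) = ∫ u in Ioo 0 1, -log u * f u := by
  have hmul : ∀ x ∈ Ioo (0 : ℝ) 1, ∀ y ∈ Ioo (0 : ℝ) 1, x * y ∈ Ioo (0 : ℝ) 1 :=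
    fun x hx y hy => ⟨mul_pos hx.1 hy.1, mul_lt_one_of_nonneg_of_lt_one_left hx.1.le hx.2 hy.2.le⟩
  have hinner : ∀ x ∈ Ioo (0 : ℝ) 1, ENNReal.ofReal (∫ y in Ioo 0 1, f (x * y)) =
      ∫⁻ y in Ioo 0 1, ENNReal.ofReal (f (x * y)) := by
    intro x hx
    refine ofReal_integral_eq_lintegral_ofReal
      ((hfi.mono_set (Ioo_subset_Ioo_right hx.2.le)).comp_mul_left_Ioo hx.1) ?_
    filter_upwards [ae_restrict_mem measurableSet_Ioo] with y hy using hf0 _ (hmul x hx y hy)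
  have hneglog : ∀ u ∈ Ioo (0 : ℝ) 1, 0 ≤ -log u :=
    fun u hu => neg_nonneg.2 (log_nonpos hu.1.le hu.2.le)
  rw [integral_eq_lintegral_of_nonneg_ae, integral_eq_lintegral_of_nonneg_ae,
    setLIntegral_congr_fun measurableSet_Ioo hinner,
    lintegral_Ioo_lintegral_Ioo_comp_mul hf.ennreal_ofReal]
  · congr 1
    refine setLIntegral_congr_fun measurableSet_Ioo fun u hu => ?_
    rw [ENNReal.ofReal_mul (hneglog u hu)]
  · filter_upwards [ae_restrict_mem measurableSet_Ioo] with u hu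
    exact mul_nonneg (hneglog u hu) (hf0 u hu)
  · exact (measurable_log.neg.mul hf).aestronglyMeasurable
  · filter_upwards [ae_restrict_mem measurableSet_Ioo] with x hx
    exact setIntegral_nonneg measurableSet_Ioo fun y hy => hf0 _ (hmul x hx y hy)
  · exact (hf.comp measurable_mul).stronglyMeasurable.integral_prod_right'.aestronglyMeasurable

theorem integrableOn_two_mul_rpow_div_one_add_sq_rpow {z : ℝ} (hz : 0 < z) :
    IntegrableOn (fun u : ℝ => (2 * u) ^ (z - 1) / (1 + u ^ 2) ^ z) (Ioo 0 1) := by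
  have hdom : IntegrableOn (fun u : ℝ => 2 ^ (z - 1) * u ^ (z - 1)) (Ioo 0 1) :=
    ((intervalIntegral.integrableOn_Ioo_rpow_iff one_pos).2 (by linarith)).const_mul _
  refine hdom.mono' (Measurable.aestronglyMeasurable (by fun_prop)) ?_
  filter_upwards [ae_restrict_mem measurableSet_Ioo] with u hu
  have h2u : 0 ≤ 2 * u := by linarith [hu.1]
  rw [norm_of_nonneg (div_nonneg (rpow_nonneg h2u _) (rpow_nonneg (by positivity) _)),
    ← mul_rpow zero_le_two hu.1.le]
  exact div_le_self (rpow_nonneg h2u _) (one_le_rpow (by nlinarith) hz.le)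

/-- For `z > 0`, `β(z,2) = ∫₀^∞ x cosh(x)^{-z} dx = 2 ∫₀¹∫₀¹ (2xy)^{z-1}/(1+x²y²)^z dx dy`. -/
theorem genBeta_two_double_integral (z : ℝ) (hz : 0 < z) :
    ∫ x in Set.Ioi (0 : ℝ), x / Real.cosh x ^ z =
      2 * ∫ x in (0 : ℝ)..1, ∫ y in (0 : ℝ)..1,
        (2 * x * y) ^ (z - 1) / (1 + x ^ 2 * y ^ 2) ^ z := by
  set h : ℝ → ℝ := fun u => (2 * u) ^ (z - 1) / (1 + u ^ 2) ^ z with h_def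
  have hsubst : ∀ u ∈ Ioo (0 : ℝ) 1,
      u⁻¹ • (-log u / cosh (-log u) ^ z) = 2 * (-log u * h u) := by
    intro u hu
    have h2u : 0 < 2 * u := by linarith [hu.1]
    simp only [h_def, smul_eq_mul]
    rw [cosh_neg_log hu.1, div_rpow (by positivity) h2u.le, rpow_sub_one h2u.ne']
    field_simp
  have hrhs : ∫ x in (0 : ℝ)..1, ∫ y in (0 : ℝ)..1,
      (2 * x * y) ^ (z - 1) / (1 + x ^ 2 * y ^ 2) ^ z =
        ∫ x in Ioo 0 1, ∫ y in Ioo 0 1, h (x * y) := by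
    simp only [intervalIntegral.integral_of_le zero_le_one, integral_Ioc_eq_integral_Ioo, h_def,
      mul_assoc, mul_pow]
  rw [integral_Ioi_zero_eq_integral_Ioo_neg_log, setIntegral_congr_fun measurableSet_Ioo hsubst,
    integral_const_mul, hrhs, integral_Ioo_integral_Ioo_comp_mul (by fun_prop)
      (integrableOn_two_mul_rpow_div_one_add_sq_rpow hz)
      fun u hu => div_nonneg (rpow_nonneg (by linarith [hu.1]) _) (rpow_nonneg (by positivity) _)]
end

section
/- The Catalan constant satisfies the Beukers-type double integral representation G = (1/2) ∫₀¹∫₀¹ dx dy / ((x+y)(1−xy)). -/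
/-!
Integrating in `y` first, by partial fractions, gives
`(log (1 + x) - log (1 - x) - log x) / (1 + x ^ 2)` for `0 < x < 1`. The Cayley
substitution `t = (1 - x) / (1 + x)`, an involution of `(0, 1)`, carries
`∫₀¹ (log (1 + x) - log (1 - x)) / (1 + x²)` to `∫₀¹ -log t / (1 + t²)`, so the double
integral is twice the latter. Expanding `1 / (1 + t²)` as a geometric series and using
`∫₀¹ t ^ k (-log t) dt = 1 / (k + 1) ^ 2` identifies `∫₀¹ -log t / (1 + t²)` with `G`.
-/

open Real MeasureTheory Set intervalIntegral

theorem intervalIntegrable_pow_mul_neg_log (k : ℕ) (a b : ℝ) :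
    IntervalIntegrable (fun x => x ^ k * -log x) volume a b :=
  intervalIntegrable_log'.neg.continuousOn_mul (continuous_pow k).continuousOn

theorem integral_pow_mul_neg_log (k : ℕ) :
    ∫ x in (0 : ℝ)..1, x ^ k * -log x = 1 / (k + 1) ^ 2 := by
  let F : ℝ → ℝ := fun x => x ^ (k + 1) / (k + 1) ^ 2 - x ^ (k + 1) * log x / (k + 1)
  -- `x ^ (k + 1) * log x = x ^ k * (x * log x)` extends continuously to `x = 0`
  have hF : Continuous F := by
    have h : Continuous fun x : ℝ => x ^ k * (x * log x) :=
      (continuous_pow k).mul continuous_mul_log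
    simp only [← mul_assoc, ← pow_succ] at h
    fun_prop
  have hF' : ∀ x ∈ Ioo (0 : ℝ) 1, HasDerivAt F (x ^ k * -log x) x := by
    intro x hx
    have := (((hasDerivAt_pow (k + 1) x).div_const ((k + 1 : ℝ) ^ 2)).sub
      (((hasDerivAt_pow (k + 1) x).mul (hasDerivAt_log hx.1.ne')).div_const (k + 1 : ℝ)))
    refine this.congr_deriv ?_
    have : x ≠ 0 := hx.1.ne'
    push_cast
    field_simp
    ring
  rw [integral_eq_sub_of_hasDerivAt_of_le zero_le_one hF.continuousOn hF'
    (intervalIntegrable_pow_mul_neg_log k 0 1)]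
  simp [F]

theorem hasSum_neg_log_div_one_add_sq {x : ℝ} (hx : |x| < 1) :
    HasSum (fun n : ℕ => (-1) ^ n * (x ^ (2 * n) * -log x)) (-log x / (1 + x ^ 2)) := by
  have hq : |-x ^ 2| < 1 := by rwa [abs_neg, abs_of_nonneg (sq_nonneg x), sq_lt_one_iff_abs_lt_one]
  have := (hasSum_geometric_of_abs_lt_one hq).mul_right (-log x)
  rw [sub_neg_eq_add, inv_mul_eq_div] at this
  refine this.congr_fun fun n => ?_
  rw [neg_pow (x ^ 2), ← pow_mul]; ring

theorem integrableOn_neg_log_div_one_add_sq :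
    IntegrableOn (fun x => -log x / (1 + x ^ 2)) (Ioo (0 : ℝ) 1) := by
  simp only [div_eq_mul_inv]
  exact (intervalIntegrable_iff_integrableOn_Ioo_of_le zero_le_one).1 <|
    intervalIntegrable_log'.neg.mul_continuousOn
      ((continuous_const.add (continuous_pow 2)).inv₀
        fun x => (by positivity : (1 : ℝ) + x ^ 2 ≠ 0)).continuousOn

theorem integral_neg_log_div_one_add_sq :
    ∫ x in (0 : ℝ)..1, -log x / (1 + x ^ 2) =
      ∑' n : ℕ, (-1) ^ n / (2 * (n : ℝ) + 1) ^ 2 := by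
  have hIoo (k : ℕ) : ∫ x in Ioo (0 : ℝ) 1, x ^ k * -log x = 1 / (k + 1) ^ 2 := by
    rw [← integral_Ioc_eq_integral_Ioo, ← integral_of_le zero_le_one, integral_pow_mul_neg_log]
  have hint (k : ℕ) : IntegrableOn (fun x => x ^ k * -log x) (Ioo (0 : ℝ) 1) :=
    (intervalIntegrable_iff_integrableOn_Ioo_of_le zero_le_one).1
      (intervalIntegrable_pow_mul_neg_log k 0 1)
  have hnorm (n : ℕ) : ∫ x in Ioo (0 : ℝ) 1, ‖(-1) ^ n * (x ^ (2 * n) * -log x)‖ =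
      1 / (2 * (n : ℝ) + 1) ^ 2 := by
    have hpos : ∀ x ∈ Ioo (0 : ℝ) 1,
        ‖(-1) ^ n * (x ^ (2 * n) * -log x)‖ = x ^ (2 * n) * -log x := fun x hx => by
      rw [norm_mul, norm_pow, norm_neg, norm_one, one_pow, one_mul, Real.norm_of_nonneg]
      exact mul_nonneg (pow_nonneg hx.1.le _) (neg_nonneg.2 (log_nonpos hx.1.le hx.2.le))
    rw [setIntegral_congr_fun measurableSet_Ioo hpos, hIoo]
    push_cast
    ring
  have hsum : HasSum (fun n : ℕ => ∫ x in Ioo (0 : ℝ) 1, (-1) ^ n * (x ^ (2 * n) * -log x))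
      (∫ x in Ioo (0 : ℝ) 1, ∑' n : ℕ, (-1) ^ n * (x ^ (2 * n) * -log x)) := by
    refine hasSum_integral_of_summable_integral_norm (fun n => (hint (2 * n)).const_mul _) ?_
    simp only [hnorm]
    simpa [Function.comp_def] using (summable_one_div_nat_pow.2 one_lt_two).comp_injective
      (i := fun n : ℕ => 2 * n + 1) fun m n h => by simpa using h
  rw [integral_of_le zero_le_one, integral_Ioc_eq_integral_Ioo,
    ← setIntegral_congr_fun measurableSet_Ioo fun x hx =>
      (hasSum_neg_log_div_one_add_sq (abs_lt.2 ⟨by linarith [hx.1], hx.2⟩)).tsum_eq,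
    ← hsum.tsum_eq]
  congr 1 with n
  rw [MeasureTheory.integral_const_mul, hIoo]
  push_cast
  ring

noncomputable def cayley (x : ℝ) : ℝ := (1 - x) / (1 + x)

theorem cayley_cayley {x : ℝ} (hx : x ≠ -1) : cayley (cayley x) = x := by
  have : 1 + x ≠ 0 := fun h => hx (by linarith)
  simp only [cayley]
  field_simp
  ring

theorem mapsTo_cayley_Ioo : MapsTo cayley (Ioo 0 1) (Ioo 0 1) := fun x ⟨hx₀, hx₁⟩ => by
  simp only [cayley, mem_Ioo]
  constructor
  · apply div_pos <;> linarith
  · rw [div_lt_one (by linarith)]; linarith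

theorem cayley_image_Ioo : cayley '' Ioo 0 1 = Ioo 0 1 :=
  subset_antisymm mapsTo_cayley_Ioo.image_subset fun x hx =>
    ⟨cayley x, mapsTo_cayley_Ioo hx, cayley_cayley (by linarith [hx.1])⟩

theorem injOn_cayley_Ioo : InjOn cayley (Ioo 0 1) := fun x hx y hy h => by
  rw [← cayley_cayley (x := x) (by linarith [hx.1]), h, cayley_cayley (by linarith [hy.1])]

theorem hasDerivAt_cayley {x : ℝ} (hx : x ≠ -1) : HasDerivAt cayley (-2 / (1 + x) ^ 2) x := by
  have : 1 + x ≠ 0 := fun h => hx (by linarith)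
  refine (((hasDerivAt_id x).const_sub 1).div ((hasDerivAt_id x).const_add 1) this).congr_deriv ?_
  simp only [id]
  field_simp
  ring

theorem hasDerivWithinAt_cayley_Ioo :
    ∀ x ∈ Ioo (0 : ℝ) 1, HasDerivWithinAt cayley (-2 / (1 + x) ^ 2) (Ioo 0 1) x :=
  fun x hx => (hasDerivAt_cayley (by linarith [hx.1])).hasDerivWithinAt

theorem abs_neg_two_div_one_add_sq (x : ℝ) : |-2 / (1 + x) ^ 2| = 2 / (1 + x) ^ 2 := by
  rw [abs_div, abs_neg, abs_two, abs_of_nonneg (sq_nonneg _)]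

section ChangeOfVariables

variable {E : Type*} [NormedAddCommGroup E] [NormedSpace ℝ E]

theorem integrableOn_Ioo_comp_cayley_iff (g : ℝ → E) :
    IntegrableOn (fun x => (2 / (1 + x) ^ 2) • g (cayley x)) (Ioo 0 1) ↔
      IntegrableOn g (Ioo 0 1) := by
  conv_rhs => rw [← cayley_image_Ioo]
  rw [integrableOn_image_iff_integrableOn_abs_deriv_smul measurableSet_Ioo
    hasDerivWithinAt_cayley_Ioo injOn_cayley_Ioo]
  simp only [abs_neg_two_div_one_add_sq]

theorem setIntegral_Ioo_comp_cayley (g : ℝ → E) :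
    ∫ x in Ioo 0 1, (2 / (1 + x) ^ 2) • g (cayley x) = ∫ x in Ioo 0 1, g x := by
  conv_rhs => rw [← cayley_image_Ioo]
  rw [integral_image_eq_integral_abs_deriv_smul measurableSet_Ioo
    hasDerivWithinAt_cayley_Ioo injOn_cayley_Ioo]
  simp only [abs_neg_two_div_one_add_sq]

end ChangeOfVariables

theorem two_div_one_add_sq_mul_neg_log_cayley {x : ℝ} (hx : x ∈ Ioo (0 : ℝ) 1) :
    2 / (1 + x) ^ 2 * (-log (cayley x) / (1 + cayley x ^ 2)) =
      (log (1 + x) - log (1 - x)) / (1 + x ^ 2) := by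
  have h₁ : 0 < 1 - x := by linarith [hx.2]
  have h₂ : 0 < 1 + x := by linarith [hx.1]
  rw [cayley, log_div h₁.ne' h₂.ne']
  field_simp
  ring

theorem integral_inv_mul_one_sub_mul {x : ℝ} (hx : x ∈ Ioo (0 : ℝ) 1) :
    ∫ y in (0 : ℝ)..1, 1 / ((x + y) * (1 - x * y)) =
      (log (1 + x) - log (1 - x) - log x) / (1 + x ^ 2) := by
  obtain ⟨hx₀, hx₁⟩ := hx
  have hpos : ∀ y ∈ uIcc (0 : ℝ) 1, 0 < x + y ∧ 0 < 1 - x * y := fun y hy => by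
    rw [uIcc_of_le zero_le_one] at hy
    exact ⟨by linarith [hy.1], by nlinarith [hy.1, hy.2]⟩
  -- partial fractions: `1 / ((x + y) (1 - x y)) = (1 / (x + y) + x / (1 - x y)) / (1 + x ^ 2)`
  have hderiv : ∀ y ∈ uIcc (0 : ℝ) 1, HasDerivAt
      (fun y => (log (x + y) - log (1 - x * y)) / (1 + x ^ 2)) (1 / ((x + y) * (1 - x * y))) y := by
    intro y hy
    obtain ⟨h₁, h₂⟩ := hpos y hy
    refine ((((hasDerivAt_id y).const_add x).log h₁.ne').sub
      ((((hasDerivAt_id y).const_mul x).const_sub 1).log h₂.ne') |>.div_const _).congr_deriv ?_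
    simp only [id]
    field_simp
    ring
  have hcont : ContinuousOn (fun y => 1 / ((x + y) * (1 - x * y))) (uIcc 0 1) :=
    continuousOn_const.div (by fun_prop) fun y hy => (mul_pos (hpos y hy).1 (hpos y hy).2).ne'
  rw [integral_eq_sub_of_hasDerivAt hderiv hcont.intervalIntegrable]
  simp only [add_zero, mul_zero, sub_zero, mul_one, log_one, add_comm x 1]
  ring

/-- Beukers-type integral for Catalan's constant:
`G = (1/2) ∫₀¹∫₀¹ dx dy / ((x+y)(1−xy))`. -/
theorem catalan_beukers_integral :
    (∑' n : ℕ, (-1) ^ n / (2 * (n : ℝ) + 1) ^ 2) =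
      (1 / 2) * ∫ x in (0 : ℝ)..1, ∫ y in (0 : ℝ)..1, 1 / ((x + y) * (1 - x * y)) := by
  set g : ℝ → ℝ := fun x => -log x / (1 + x ^ 2)
  have hg : IntegrableOn g (Ioo 0 1) := integrableOn_neg_log_div_one_add_sq
  have hgc : IntegrableOn (fun x => (2 / (1 + x) ^ 2) • g (cayley x)) (Ioo 0 1) :=
    (integrableOn_Ioo_comp_cayley_iff g).2 hg
  have hinner : EqOn (fun x => ∫ y in (0 : ℝ)..1, 1 / ((x + y) * (1 - x * y)))
      (fun x => (2 / (1 + x) ^ 2) • g (cayley x) + g x) (Ioo 0 1) := fun x hx => by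
    simp only [integral_inv_mul_one_sub_mul hx, smul_eq_mul, g,
      two_div_one_add_sq_mul_neg_log_cayley hx]
    ring
  rw [← integral_neg_log_div_one_add_sq, integral_of_le zero_le_one, integral_of_le zero_le_one,
    integral_Ioc_eq_integral_Ioo, integral_Ioc_eq_integral_Ioo,
    setIntegral_congr_fun measurableSet_Ioo hinner, integral_add hgc hg,
    setIntegral_Ioo_comp_cayley]
  ring
end

section
/- ∫₀¹∫₀¹ dx dy / ((1 + x²y²)(1 − xy)) = G/2 + (9/16)·ζ(2), where G is Catalan's constant and ζ the Riemann zeta function. -/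
/-!
At `t = xy` the integrand is `(1 + t) / (1 - t⁴) = ∑ₖ (t^(4k) + t^(4k+1))`, a series of
nonnegative terms, and `∫₀¹∫₀¹ (xy)ⁿ = 1/(n+1)²`; hence the integral equals
`∑ₖ (1/(4k+1)² + 1/(4k+2)²)`. Adding `∑ 1/(2n+1)² = π²/8` and `G = ∑ (-1)ⁿ/(2n+1)²` kills the
terms of odd index, so `∑ₖ 1/(4k+1)² = (π²/8 + G)/2`, while `∑ₖ 1/(4k+2)² = π²/32`.
-/

open MeasureTheory Real Set

theorem hasSum_intervalIntegral_of_nonneg {ι : Type*} [Countable ι] {f : ι → ℝ → ℝ} {a b : ℝ}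
    (hab : a ≤ b) (hf : ∀ i, IntervalIntegrable (f i) volume a b)
    (hf0 : ∀ i, ∀ x ∈ Ioc a b, 0 ≤ f i x) (hs : Summable fun i => ∫ x in a..b, f i x) :
    HasSum (fun i => ∫ x in a..b, f i x) (∫ x in a..b, ∑' i, f i x) := by
  simp only [intervalIntegral.integral_of_le hab] at hs ⊢
  refine hasSum_integral_of_summable_integral_norm (fun i => (hf i).1) (hs.congr fun i => ?_)
  exact setIntegral_congr_fun measurableSet_Ioc fun x hx => (norm_of_nonneg (hf0 i x hx)).symm

theorem integral_mul_pow (x : ℝ) (n : ℕ) :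
    ∫ y in (0 : ℝ)..1, (x * y) ^ n = x ^ n / (n + 1) := by
  simp_rw [mul_pow]
  rw [intervalIntegral.integral_const_mul, integral_pow]
  simp [div_eq_mul_inv]

theorem hasSum_one_div_one_add_sq_mul_one_sub {t : ℝ} (ht : |t| < 1) :
    HasSum (fun k : ℕ => t ^ (4 * k) + t ^ (4 * k + 1)) (1 / ((1 + t ^ 2) * (1 - t))) := by
  have h4 : |t ^ 4| < 1 := by
    rw [abs_pow]; exact pow_lt_one₀ (abs_nonneg t) ht (by norm_num)
  have hden : 1 - t ^ 4 ≠ 0 := by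
    have := (abs_lt.mp h4).2; linarith
  have ht1 : 1 - t ≠ 0 := by
    have := (abs_lt.mp ht).2; linarith
  have h := (hasSum_geometric_of_abs_lt_one h4).mul_left (1 + t)
  rw [show (1 + t) * (1 - t ^ 4)⁻¹ = 1 / ((1 + t ^ 2) * (1 - t)) by field_simp; ring] at h
  exact h.congr_fun fun k => by rw [pow_mul, pow_succ]; ring

theorem hasSum_integral_one_div_one_add_sq_mul_one_sub {x : ℝ} (hx0 : 0 ≤ x) (hx1 : x < 1) :
    HasSum (fun k : ℕ => x ^ (4 * k) / (4 * k + 1) + x ^ (4 * k + 1) / (4 * k + 2))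
      (∫ y in (0 : ℝ)..1, 1 / ((1 + x ^ 2 * y ^ 2) * (1 - x * y))) := by
  have hterm (k : ℕ) : ∫ y in (0 : ℝ)..1, ((x * y) ^ (4 * k) + (x * y) ^ (4 * k + 1)) =
      x ^ (4 * k) / (4 * k + 1) + x ^ (4 * k + 1) / (4 * k + 2) := by
    rw [intervalIntegral.integral_add
      ((by fun_prop : Continuous _).intervalIntegrable _ _)
      ((by fun_prop : Continuous _).intervalIntegrable _ _), integral_mul_pow,
      integral_mul_pow]
    push_cast
    ring
  have hseries : ∀ y ∈ uIcc (0 : ℝ) 1, 1 / ((1 + x ^ 2 * y ^ 2) * (1 - x * y)) =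
      ∑' k : ℕ, ((x * y) ^ (4 * k) + (x * y) ^ (4 * k + 1)) := by
    intro y hy
    rw [uIcc_of_le zero_le_one] at hy
    have hxy : |x * y| < 1 := by
      rw [abs_of_nonneg (mul_nonneg hx0 hy.1)]
      exact (mul_le_of_le_one_right hx0 hy.2).trans_lt hx1
    rw [(hasSum_one_div_one_add_sq_mul_one_sub hxy).tsum_eq, mul_pow]
  have hsummable :
      Summable fun k : ℕ => x ^ (4 * k) / (4 * k + 1) + x ^ (4 * k + 1) / (4 * k + 2) := by
    refine (hasSum_one_div_one_add_sq_mul_one_sub (abs_lt.mpr ⟨by linarith, hx1⟩)).summable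
      |>.of_nonneg_of_le (fun k => by positivity) fun k => add_le_add ?_ ?_
    · exact div_le_self (by positivity) (by linarith [k.cast_nonneg (α := ℝ)])
    · exact div_le_self (by positivity) (by linarith [k.cast_nonneg (α := ℝ)])
  have h := hasSum_intervalIntegral_of_nonneg zero_le_one
    (f := fun (k : ℕ) (y : ℝ) => (x * y) ^ (4 * k) + (x * y) ^ (4 * k + 1))
    (fun k => (by fun_prop : Continuous _).intervalIntegrable _ _)
    (fun k y hy => by have := mul_nonneg hx0 hy.1.le; positivity)
    (by simpa only [hterm] using hsummable)
  simp only [hterm] at h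
  rwa [intervalIntegral.integral_congr hseries]

theorem hasSum_one_div_two_mul_add_one_sq :
    HasSum (fun k : ℕ => 1 / (2 * (k : ℝ) + 1) ^ 2) (π ^ 2 / 8) := by
  have heven : HasSum (fun k : ℕ => 1 / ((2 * k : ℕ) : ℝ) ^ 2) (π ^ 2 / 24) := by
    have h : (fun k : ℕ => 1 / ((2 * k : ℕ) : ℝ) ^ 2) =
        fun k : ℕ => 1 / 4 * (1 / (k : ℝ) ^ 2) := by
      ext k; push_cast; ring
    rw [h, show π ^ 2 / 24 = 1 / 4 * (π ^ 2 / 6) by ring]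
    exact hasSum_zeta_two.mul_left _
  obtain ⟨b, hodd⟩ : Summable fun k : ℕ => 1 / ((2 * k + 1 : ℕ) : ℝ) ^ 2 :=
    hasSum_zeta_two.summable.comp_injective fun i j hij => by omega
  have hb : b = π ^ 2 / 8 := by
    have := hasSum_zeta_two.unique
      (HasSum.even_add_odd (f := fun n : ℕ => 1 / (n : ℝ) ^ 2) heven hodd)
    linarith
  subst hb
  simpa using hodd

theorem summable_neg_one_pow_div_two_mul_add_one_sq :
    Summable fun n : ℕ => (-1) ^ n / (2 * (n : ℝ) + 1) ^ 2 :=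
  hasSum_one_div_two_mul_add_one_sq.summable.of_norm_bounded fun n => by
    rw [norm_div, norm_pow, norm_neg, norm_one, one_pow, norm_of_nonneg (by positivity)]

theorem hasSum_one_div_four_mul_add_one_sq :
    HasSum (fun k : ℕ => 1 / (4 * (k : ℝ) + 1) ^ 2)
      ((π ^ 2 / 8 + ∑' n : ℕ, (-1) ^ n / (2 * (n : ℝ) + 1) ^ 2) / 2) := by
  have h := (hasSum_one_div_two_mul_add_one_sq.add
    summable_neg_one_pow_div_two_mul_add_one_sq.hasSum).div_const 2
  have hodd_zero : ∀ n ∉ Set.range (2 * · : ℕ → ℕ),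
      (1 / (2 * (n : ℝ) + 1) ^ 2 + (-1) ^ n / (2 * (n : ℝ) + 1) ^ 2) / 2 = 0 := by
    intro n hn
    have : Odd n := by
      rw [← Nat.not_even_iff_odd]
      rintro ⟨k, rfl⟩
      exact hn ⟨k, two_mul k⟩
    rw [this.neg_one_pow]
    ring
  refine (((mul_right_injective₀ two_ne_zero).hasSum_iff hodd_zero).mpr h).congr_fun fun k => ?_
  simp only [Function.comp_apply, pow_mul, neg_one_sq, one_pow]
  push_cast
  ring

theorem hasSum_one_div_four_mul_add_two_sq :
    HasSum (fun k : ℕ => 1 / (4 * (k : ℝ) + 2) ^ 2) (π ^ 2 / 32) := by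
  have h := hasSum_one_div_two_mul_add_one_sq.mul_left (1 / 4)
  rw [show 1 / 4 * (π ^ 2 / 8) = π ^ 2 / 32 by ring] at h
  exact h.congr_fun fun k => by field_simp; ring

theorem hasSum_double_integral_one_div_one_add_sq_mul_one_sub :
    HasSum (fun k : ℕ => 1 / (4 * (k : ℝ) + 1) ^ 2 + 1 / (4 * (k : ℝ) + 2) ^ 2)
      (∫ x in (0 : ℝ)..1, ∫ y in (0 : ℝ)..1, 1 / ((1 + x ^ 2 * y ^ 2) * (1 - x * y))) := by
  have hterm (k : ℕ) :
      ∫ x in (0 : ℝ)..1, (x ^ (4 * k) / (4 * k + 1) + x ^ (4 * k + 1) / (4 * k + 2)) =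
        1 / (4 * (k : ℝ) + 1) ^ 2 + 1 / (4 * (k : ℝ) + 2) ^ 2 := by
    rw [intervalIntegral.integral_add
      ((by fun_prop : Continuous _).intervalIntegrable _ _)
      ((by fun_prop : Continuous _).intervalIntegrable _ _),
      intervalIntegral.integral_div, intervalIntegral.integral_div, integral_pow, integral_pow]
    push_cast
    field_simp
    ring
  have h := hasSum_intervalIntegral_of_nonneg zero_le_one
    (f := fun (k : ℕ) (x : ℝ) => x ^ (4 * k) / (4 * k + 1) + x ^ (4 * k + 1) / (4 * k + 2))
    (fun k => (by fun_prop : Continuous _).intervalIntegrable _ _)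
    (fun k x hx => by have := hx.1.le; positivity)
    (by simpa only [hterm] using
      (hasSum_one_div_four_mul_add_one_sq.add hasSum_one_div_four_mul_add_two_sq).summable)
  simp only [hterm] at h
  -- the expansion of the inner integral needs `x < 1`; the endpoint is a null set
  rwa [intervalIntegral.integral_congr_ae]
  filter_upwards [Measure.ae_ne volume 1] with x hx1 hx
  rw [uIoc_of_le zero_le_one] at hx
  exact (hasSum_integral_one_div_one_add_sq_mul_one_sub hx.1.le (hx.2.lt_of_ne hx1)).tsum_eq.symm

/-- `∫₀¹∫₀¹ dx dy / ((1+x²y²)(1−xy)) = G/2 + (9/16) ζ(2)`. -/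
theorem double_integral_catalan_zeta :
    (∫ x in (0 : ℝ)..1, ∫ y in (0 : ℝ)..1, 1 / ((1 + x ^ 2 * y ^ 2) * (1 - x * y))) =
      (∑' n : ℕ, (-1) ^ n / (2 * (n : ℝ) + 1) ^ 2) / 2 +
        (9 / 16) * (Real.pi ^ 2 / 6) := by
  rw [hasSum_double_integral_one_div_one_add_sq_mul_one_sub.unique
    (hasSum_one_div_four_mul_add_one_sq.add hasSum_one_div_four_mul_add_two_sq)]
  ring
end

section
/- For all positive integers k ≥ 1 and natural numbers n, m with m ≤ n−1: Σ_{q=k}^{n} 4^{−q} C(2q−1, 2k−1) t(2n, 2q) = 4^{−k} t(2n−1, 2k−1), where t(·,·) are the central factorial numbers of the first kind and C(·,·) binomial coefficients. -/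
/-- Central factorial numbers of the first kind `t(n,ν)`, satisfying
`t(n,ν) = t(n−2,ν−2) − (1/4)(n−2)² t(n−2,ν)`, with `t(0,0)=1`, `t(n,n)=1`,
`t(n,0)=0` for `n ≥ 1`. -/
noncomputable def centralFactorial : ℕ → ℕ → ℝ
  | 0, 0 => 1
  | 0, _ + 1 => 0
  | 1, 0 => 0
  | 1, 1 => 1
  | 1, _ + 2 => 0
  | _ + 2, 0 => 0
  | n + 2, 1 => -(((n : ℝ)) ^ 2 / 4) * centralFactorial n 1
  | n + 2, ν + 2 =>
      centralFactorial n ν - (((n : ℝ)) ^ 2 / 4) * centralFactorial n (ν + 2)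

/-!
Let `x^[n] = Σ_ν t(n,ν) x^ν` be the central factorial polynomial, so that
`x^[n+2] = (x² − n²/4) x^[n]`. Then `A_n = x^[2n] / x = x ∏_{j=1}^{n−1} (x² − j²)` and
`B_n = x^[2n−1] / x = ∏_{j=1}^{n−1} (x² − (j − ½)²)`, and after the shift `x ↦ x + ½` the factors
of `A_n` telescope against those of `B_n`: `A_n(x + ½) = (x + n − ½) B_n(x)`. By the binomial
theorem the coefficient of `x^{2k−1}` on the left is `4^k Σ_q 4^{−q} C(2q−1, 2k−1) t(2n, 2q)`;
on the right `B_n` is even, so that coefficient is the one of `x^{2k−2}` in `B_n`, namely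
`t(2n−1, 2k−1)`.
-/

open Polynomial Finset

theorem centralFactorial_eq_zero_of_lt : ∀ {n ν : ℕ}, n < ν → centralFactorial n ν = 0
  | 0, 0, h | 1, 0, h | 1, 1, h | _ + 2, 0, h | _ + 2, 1, h => by omega
  | 0, _ + 1, _ | 1, _ + 2, _ => by simp [centralFactorial]
  | n + 2, ν + 2, h => by
    rw [centralFactorial, centralFactorial_eq_zero_of_lt (by omega),
      centralFactorial_eq_zero_of_lt (by omega)]
    ring

theorem centralFactorial_eq_zero_of_odd : ∀ {n ν : ℕ}, Odd (n + ν) → centralFactorial n ν = 0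
  | 0, 0, h | 1, 1, h => absurd h (by decide)
  | 0, _ + 1, _ | 1, 0, _ | 1, _ + 2, _ | _ + 2, 0, _ => by simp [centralFactorial]
  | n + 2, 1, h => by
    rw [centralFactorial, centralFactorial_eq_zero_of_odd (by grind), mul_zero]
  | n + 2, ν + 2, h => by
    rw [centralFactorial, centralFactorial_eq_zero_of_odd (by grind),
      centralFactorial_eq_zero_of_odd (ν := ν + 2) (by grind)]
    ring

theorem centralFactorial_succ_zero : ∀ n : ℕ, centralFactorial (n + 1) 0 = 0
  | 0 | _ + 1 => by simp [centralFactorial]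

noncomputable def centralFactorialPoly : ℕ → ℝ[X]
  | 0 => 1
  | 1 => X
  | n + 2 => (X ^ 2 - C ((n : ℝ) ^ 2 / 4)) * centralFactorialPoly n

theorem coeff_centralFactorialPoly : ∀ n ν : ℕ,
    (centralFactorialPoly n).coeff ν = centralFactorial n ν
  | 0, ν => by cases ν <;> simp [centralFactorialPoly, centralFactorial, coeff_one]
  | 1, ν => by rcases ν with _ | _ | ν <;> simp [centralFactorialPoly, centralFactorial, coeff_X]
  | n + 2, ν => by
    simp only [centralFactorialPoly, sub_mul, coeff_sub, coeff_C_mul, coeff_X_pow_mul',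
      coeff_centralFactorialPoly n]
    rcases ν with _ | _ | ν
    · rcases n with _ | n
      · simp [centralFactorial]
      · simp [centralFactorial, centralFactorial_succ_zero]
    · simp [centralFactorial]
    · simp [centralFactorial]

theorem X_mul_divX_centralFactorialPoly (n : ℕ) :
    X * (centralFactorialPoly (n + 1)).divX = centralFactorialPoly (n + 1) := by
  have h := X_mul_divX_add (centralFactorialPoly (n + 1))
  rwa [coeff_centralFactorialPoly, centralFactorial_succ_zero, C_0, add_zero] at h

theorem divX_centralFactorialPoly_add_three (n : ℕ) :
    (centralFactorialPoly (n + 3)).divX =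
      (X ^ 2 - C (((n : ℝ) + 1) ^ 2 / 4)) * (centralFactorialPoly (n + 1)).divX := by
  apply mul_left_cancel₀ (X_ne_zero (R := ℝ))
  rw [X_mul_divX_centralFactorialPoly (n + 2), centralFactorialPoly]
  conv_lhs => rw [← X_mul_divX_centralFactorialPoly n]
  push_cast
  ring

theorem taylor_divX_centralFactorialPoly (m : ℕ) :
    taylor (1 / 2) (centralFactorialPoly (2 * m + 2)).divX =
      (X + C ((m : ℝ) + 1 / 2)) * (centralFactorialPoly (2 * m + 1)).divX := by
  induction m with
  | zero =>
    have h2 : (centralFactorialPoly 2).divX = X := by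
      apply mul_left_cancel₀ (X_ne_zero (R := ℝ))
      rw [X_mul_divX_centralFactorialPoly 1]
      simp [centralFactorialPoly, pow_two]
    have h1 : (centralFactorialPoly 1).divX = 1 := by
      simpa [centralFactorialPoly] using divX_X_pow (R := ℝ) (n := 1)
    simp only [Nat.mul_zero, Nat.zero_add, h2, h1, taylor_X]
    simp
  | succ m ih =>
    rw [show 2 * (m + 1) + 2 = 2 * m + 1 + 3 by ring, divX_centralFactorialPoly_add_three,
      taylor_mul, show 2 * m + 1 + 1 = 2 * m + 2 by ring, ih,
      show 2 * (m + 1) + 1 = 2 * m + 3 by ring, divX_centralFactorialPoly_add_three]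
    simp only [map_sub, taylor_X_pow, taylor_C, ← mul_assoc]
    congr 1
    refine Polynomial.funext fun x => ?_
    simp only [eval_mul, eval_add, eval_sub, eval_pow, eval_X, eval_C]
    push_cast
    ring

theorem coeff_taylor_eq_sum_range {R : Type*} [Semiring R] (r : R) (f : R[X]) {m N : ℕ}
    (h : f.natDegree - m < N) :
    (taylor r f).coeff m = ∑ i ∈ range N, ((i + m).choose m : R) * f.coeff (i + m) * r ^ i := by
  rw [taylor_coeff, eval_eq_sum_range' (n := N) ((natDegree_hasseDeriv_le f m).trans_lt h)]
  simp only [hasseDeriv_coeff]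

theorem Finset.sum_range_two_mul {M : Type*} [AddCommMonoid M] (f : ℕ → M) (n : ℕ) :
    ∑ i ∈ range (2 * n), f i = ∑ j ∈ range n, (f (2 * j) + f (2 * j + 1)) := by
  induction n with
  | zero => simp
  | succ n ih => rw [Nat.mul_succ, sum_range_succ, sum_range_succ, sum_range_succ, ih, add_assoc]

theorem coeff_taylor_divX_centralFactorialPoly (a b : ℕ) :
    (taylor (1 / 2) (centralFactorialPoly (2 * b + 2)).divX).coeff (2 * a + 1) =
      centralFactorial (2 * b + 1) (2 * a + 1) := by
  rw [taylor_divX_centralFactorialPoly, add_mul, coeff_add, coeff_X_mul, coeff_C_mul,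
    coeff_divX, coeff_divX, coeff_centralFactorialPoly, coeff_centralFactorialPoly,
    centralFactorial_eq_zero_of_odd (ν := 2 * a + 1 + 1) ⟨a + b + 1, by ring⟩, mul_zero, add_zero]

theorem sum_Icc_eq_coeff_taylor_divX_centralFactorialPoly {a b : ℕ} (hab : a ≤ b) :
    ∑ q ∈ Icc (a + 1) (b + 1),
        (4 : ℝ) ^ (-(q : ℤ)) * ((2 * q - 1).choose (2 * a + 1) : ℝ) *
          centralFactorial (2 * (b + 1)) (2 * q) =
      (4 : ℝ) ^ (-((a + 1 : ℕ) : ℤ)) *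
        (taylor (1 / 2) (centralFactorialPoly (2 * b + 2)).divX).coeff (2 * a + 1) := by
  set A := (centralFactorialPoly (2 * b + 2)).divX
  have hA : ∀ j, A.coeff j = centralFactorial (2 * b + 2) (j + 1) := fun j => by
    rw [coeff_divX, coeff_centralFactorialPoly]
  have hdeg : A.natDegree ≤ 2 * b + 1 := natDegree_le_iff_coeff_eq_zero.2 fun j hj => by
    rw [hA, centralFactorial_eq_zero_of_lt (by omega)]
  rw [coeff_taylor_eq_sum_range _ _ (N := 2 * (b + 1 - a)) (by omega), sum_range_two_mul,
    ← Ico_add_one_right_eq_Icc, sum_Ico_eq_sum_range, mul_sum,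
    show b + 1 + 1 - (a + 1) = b + 1 - a by omega]
  refine sum_congr rfl fun d _ => ?_
  rw [hA, hA, centralFactorial_eq_zero_of_odd (ν := 2 * d + 1 + (2 * a + 1) + 1)
    ⟨a + b + d + 2, by ring⟩, mul_zero, zero_mul, add_zero,
    show 2 * (a + 1 + d) - 1 = 2 * d + (2 * a + 1) by omega,
    show 2 * (a + 1 + d) = 2 * d + (2 * a + 1) + 1 by omega,
    show 2 * (b + 1) = 2 * b + 2 by ring]
  push_cast
  rw [neg_add, zpow_add₀ four_ne_zero, zpow_neg (4 : ℝ) d, zpow_natCast, pow_mul, ← inv_pow]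
  norm_num
  ring

/-- `Σ_{q=k}^n 4^{−q} C(2q−1,2k−1) t(2n,2q) = 4^{−k} t(2n−1,2k−1)` for `1 ≤ k ≤ n`. -/
theorem centralFactorial_identity (k n : ℕ) (hk : 1 ≤ k) (hkn : k ≤ n) :
    ∑ q ∈ Finset.Icc k n,
        (4 : ℝ) ^ (-(q : ℤ)) * (Nat.choose (2 * q - 1) (2 * k - 1) : ℝ) *
          centralFactorial (2 * n) (2 * q) =
      (4 : ℝ) ^ (-(k : ℤ)) * centralFactorial (2 * n - 1) (2 * k - 1) := by
  obtain ⟨a, rfl⟩ : ∃ a, k = a + 1 := ⟨k - 1, by omega⟩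
  obtain ⟨b, rfl⟩ : ∃ b, n = b + 1 := ⟨n - 1, by omega⟩
  rw [show 2 * (a + 1) - 1 = 2 * a + 1 by omega, show 2 * (b + 1) - 1 = 2 * b + 1 by omega,
    sum_Icc_eq_coeff_taylor_divX_centralFactorialPoly (by omega),
    coeff_taylor_divX_centralFactorialPoly]
end
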